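/- arXiv:2012.01004 — 4 statements merged into one kernel-verified Lean document; each statement's English description precedes it below -/
import Mathlib

section
/- Let w be a weight profile that is distinct or essentially distinct, and let (P, q) be a problem at which a w-popular matching exists. Then every w-popular matching at (P, q) is the outcome at (P, q) of some serial dictatorship whose ordering is consistent with w. -/
open scoped Classical

section Defs

variable {I O : Type} [Fintype I] [Fintype O]

/-- A mechanism maps each problem (preference profile, capacity profile) to an assignment. -/
abbrev Mechanism (I O : Type) : Type :=
  (I → LinearOrder (Option O)) → (O → ℕ) → I → Option O

/-- `x` is strictly preferred to `y` under the strict preference (linear order) `p`,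
where `none` represents being unassigned (∅). -/
def Prefers (p : LinearOrder (Option O)) (x y : Option O) : Prop := p.lt y x

/-- A matching: each object `a` is assigned to at most `q a` agents. -/
def IsMatching (q : O → ℕ) (μ : I → Option O) : Prop :=
  ∀ a : O, (Finset.univ.filter fun i : I => μ i = some a).card ≤ q a

/-- Every object has capacity at least one. -/
def ValidCaps (q : O → ℕ) : Prop := ∀ a : O, 1 ≤ q a

/-- `μ` is more w-popular than `μ'`. -/
def MoreWPopular (w : I → ℝ) (P : I → LinearOrder (Option O)) (μ μ' : I → Option O) : Prop :=
  (∑ j ∈ Finset.univ.filter fun j : I => Prefers (P j) (μ' j) (μ j), w j)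
    < ∑ i ∈ Finset.univ.filter fun i : I => Prefers (P i) (μ i) (μ' i), w i

/-- `μ` is a w-popular matching for problem `(P, q)`. -/
def WPopular (w : I → ℝ) (P : I → LinearOrder (Option O)) (q : O → ℕ)
    (μ : I → Option O) : Prop :=
  IsMatching q μ ∧ ∀ μ', IsMatching q μ' → ¬ MoreWPopular w P μ' μ

/-- `μ` is more popular than `μ'` (unweighted, counting agents). -/
def MorePopular (P : I → LinearOrder (Option O)) (μ μ' : I → Option O) : Prop :=
  (Finset.univ.filter fun j : I => Prefers (P j) (μ' j) (μ j)).card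
    < (Finset.univ.filter fun i : I => Prefers (P i) (μ i) (μ' i)).card

/-- `μ` is a popular matching for problem `(P, q)`. -/
def Popular (P : I → LinearOrder (Option O)) (q : O → ℕ) (μ : I → Option O) : Prop :=
  IsMatching q μ ∧ ∀ μ', IsMatching q μ' → ¬ MorePopular P μ' μ

/-- `μ'` Pareto improves upon `μ`. -/
def ParetoImproves (P : I → LinearOrder (Option O)) (μ' μ : I → Option O) : Prop :=
  (∀ i : I, (P i).le (μ i) (μ' i)) ∧ ∃ j : I, Prefers (P j) (μ' j) (μ j)

/-- `μ` is non-wasteful: no agent prefers an object with unfilled capacity to her assignment. -/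
def NonWasteful (P : I → LinearOrder (Option O)) (q : O → ℕ) (μ : I → Option O) : Prop :=
  ∀ (i : I) (a : O), (Finset.univ.filter fun j : I => μ j = some a).card < q a →
    ¬ Prefers (P i) (some a) (μ i)

/-- The enumeration `e` lists the agents in weakly decreasing order of weight. -/
def DecreasingEnum (w : I → ℝ) (e : Fin (Fintype.card I) ≃ I) : Prop :=
  ∀ j k : Fin (Fintype.card I), j ≤ k → w (e k) ≤ w (e j)

/-- The weight profile is cumulatively ordered (w.r.t. the decreasing enumeration `e`):
each agent's weight is at least the sum of the weights of all later agents. -/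
def CumulativelyOrdered (w : I → ℝ) (e : Fin (Fintype.card I) ≃ I) : Prop :=
  ∀ j : Fin (Fintype.card I),
    (∑ k ∈ Finset.univ.filter fun k : Fin (Fintype.card I) => j < k, w (e k)) ≤ w (e j)

/-- All weights are pairwise different. -/
def DistinctWeights (w : I → ℝ) : Prop := Function.Injective w

/-- Essentially distinct (w.r.t. the decreasing enumeration `e`): all weights except possibly
the last two are pairwise different, the last two are equal, and the third-from-last weight is
at least the sum of the last two.  (Paper indices `i_1, …, i_n` correspond to `e 0, …, e (n-1)`.) -/
def EssentiallyDistinct (w : I → ℝ) (e : Fin (Fintype.card I) ≃ I) : Prop :=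
  (∀ j k : Fin (Fintype.card I), j < k → (k : ℕ) + 2 ≤ Fintype.card I → w (e j) ≠ w (e k)) ∧
  (∀ j k : Fin (Fintype.card I), (j : ℕ) + 2 = Fintype.card I → (k : ℕ) + 1 = Fintype.card I →
    w (e j) = w (e k)) ∧
  (∀ j k l : Fin (Fintype.card I), (j : ℕ) + 3 = Fintype.card I →
    (k : ℕ) + 2 = Fintype.card I → (l : ℕ) + 1 = Fintype.card I →
    w (e k) + w (e l) ≤ w (e j))

/-- The most preferred element (under `p`) of `{∅} ∪ {objects with remaining capacity}`. -/
noncomputable def sdChoice (p : LinearOrder (Option O)) (rem : O → ℕ) : Option O :=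
  @Finset.max' (Option O) p
    (insert none ((Finset.univ.filter fun a : O => 0 < rem a).image some))
    ⟨none, Finset.mem_insert_self _ _⟩

/-- State of the serial dictatorship after the first `k` agents (in the order `e`) have picked:
the partial assignment and the remaining capacities. -/
noncomputable def sdState (e : Fin (Fintype.card I) ≃ I)
    (P : I → LinearOrder (Option O)) (q : O → ℕ) : ℕ → (I → Option O) × (O → ℕ)
  | 0 => (fun _ => none, q)
  | k + 1 =>
    let prev := sdState e P q k
    if h : k < Fintype.card I then
      let i := e ⟨k, h⟩
      let c := sdChoice (P i) prev.2
      (Function.update prev.1 i c, fun a => if c = some a then prev.2 a - 1 else prev.2 a)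
    else prev

/-- The outcome of the serial dictatorship with agent ordering `e` at problem `(P, q)`:
agents pick, one by one in the order `e`, their most preferred acceptable object with
remaining capacity (and get ∅ if none remains). -/
noncomputable def SD (e : Fin (Fintype.card I) ≃ I)
    (P : I → LinearOrder (Option O)) (q : O → ℕ) : I → Option O :=
  (sdState e P q (Fintype.card I)).1

/-- An agent ordering is consistent with the weight profile `w` if agents with strictly larger
weight come strictly earlier. -/
def ConsistentOrder (w : I → ℝ) (e : Fin (Fintype.card I) ≃ I) : Prop :=
  ∀ i j : I, w j < w i → e.symm i < e.symm j

/-- A mechanism always produces a matching. -/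
def IsMechanism (ψ : Mechanism I O) : Prop :=
  ∀ P q, ValidCaps q → IsMatching q (ψ P q)

/-- Strategy-proofness: no agent can ever obtain a strictly preferred assignment
by misreporting. -/
def StrategyProof (ψ : Mechanism I O) : Prop :=
  ∀ P q, ValidCaps q → ∀ (i : I) (P'i : LinearOrder (Option O)),
    ¬ Prefers (P i) (ψ (Function.update P i P'i) q i) (ψ P q i)

/-- A mechanism is w-popular if its outcome is w-popular whenever a w-popular matching exists. -/
def WPopularMech (w : I → ℝ) (ψ : Mechanism I O) : Prop :=
  ∀ P q, ValidCaps q → (∃ μ, WPopular w P q μ) → WPopular w P q (ψ P q)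

/-- A mechanism is popular if its outcome is popular whenever a popular matching exists. -/
def PopularMech (ψ : Mechanism I O) : Prop :=
  ∀ P q, ValidCaps q → (∃ μ, Popular P q μ) → Popular P q (ψ P q)

/-- A mechanism is non-wasteful if its outcome is always non-wasteful. -/
def NonWastefulMech (ψ : Mechanism I O) : Prop :=
  ∀ P q, ValidCaps q → NonWasteful P q (ψ P q)

/-- `p` declares `a` as its only acceptable object (the class 𝒫ₐ). -/
def OnlyAcceptable (p : LinearOrder (Option O)) (a : O) : Prop :=
  p.lt none (some a) ∧ ∀ b : O, b ≠ a → p.lt (some b) none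

/-- `p` declares no object acceptable (the class 𝒫_∅). -/
def NothingAcceptable (p : LinearOrder (Option O)) : Prop :=
  ∀ b : O, p.lt (some b) none

/-- Preserving dispute resolutions. -/
def PreservesDisputeResolutions (ψ : Mechanism I O) : Prop :=
  ∀ P q, ValidCaps q → ∀ (i j : I) (a : O) (P'i : LinearOrder (Option O)),
    ψ P q j = some a → Prefers (P i) (some a) (ψ P q i) →
    OnlyAcceptable P'i a → ψ (Function.update P i P'i) q i = none →
    ∀ (P'' : I → LinearOrder (Option O)) (q' : O → ℕ), ValidCaps q' → q' a = 1 →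
      OnlyAcceptable (P'' i) a → OnlyAcceptable (P'' j) a →
      (∀ k : I, k ≠ i → k ≠ j → NothingAcceptable (P'' k)) →
      ψ P'' q' i = none ∧ ψ P'' q' j = some a

/-- `P'` is a (pure) Nash equilibrium of the preference-reporting game induced by `ψ`
at the problem `(P, q)` (true preferences `P`). -/
def NashEq (ψ : Mechanism I O) (P : I → LinearOrder (Option O)) (q : O → ℕ)
    (P' : I → LinearOrder (Option O)) : Prop :=
  ∀ (i : I) (P''i : LinearOrder (Option O)),
    ¬ Prefers (P i) (ψ (Function.update P' i P''i) q i) (ψ P' q i)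

/-- The mechanism admits a Nash equilibrium at every problem. -/
def AdmitsNash (ψ : Mechanism I O) : Prop :=
  ∀ P q, ValidCaps q → ∃ P', NashEq ψ P q P'

/-- w-popularity in equilibrium: every Nash-equilibrium outcome is w-popular
whenever a w-popular matching exists. -/
def WPopularInEquilibrium (w : I → ℝ) (ψ : Mechanism I O) : Prop :=
  ∀ P q, ValidCaps q → ∀ P', NashEq ψ P q P' →
    (∃ μ, WPopular w P q μ) → WPopular w P q (ψ P' q)

end Defs

set_option linter.unusedSectionVars false

section Aux

open Finset

variable {I O : Type} [Fintype I] [Fintype O]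

/-- The availability set used in `sdChoice`. -/
noncomputable def availSet (rem : O → ℕ) : Finset (Option O) :=
  insert none ((Finset.univ.filter fun a : O => 0 < rem a).image some)

lemma mem_availSet_some {rem : O → ℕ} {a : O} : some a ∈ availSet rem ↔ 0 < rem a := by
  simp [availSet]

lemma sdChoice_mem (p : LinearOrder (Option O)) (rem : O → ℕ) :
    sdChoice p rem ∈ availSet rem := by
  letI := p
  exact Finset.max'_mem _ _

lemma lt_sdChoice (p : LinearOrder (Option O)) (rem : O → ℕ) {x : Option O}
    (hx : x ∈ availSet rem) (hne : x ≠ sdChoice p rem) :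
    Prefers p (sdChoice p rem) x := by
  letI := p
  exact lt_of_le_of_ne (Finset.le_max' _ x hx) hne

lemma sdChoice_pos (p : LinearOrder (Option O)) {rem : O → ℕ} {a : O}
    (h : sdChoice p rem = some a) : 0 < rem a := by
  have := sdChoice_mem p rem
  rw [h] at this
  exact mem_availSet_some.1 this

lemma prefers_asymm (p : LinearOrder (Option O)) {x y : Option O}
    (h : Prefers p x y) : ¬ Prefers p y x := by
  letI := p
  exact lt_asymm h

lemma prefers_irrefl (p : LinearOrder (Option O)) {x : Option O}
    (h : Prefers p x x) : False := by
  letI := p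
  exact lt_irrefl x h

lemma filter_update (μ : I → Option O) (i : I) (x : Option O) (a : O) :
    (Finset.univ.filter fun j : I => Function.update μ i x j = some a) =
      if x = some a then insert i (Finset.univ.filter fun j : I => μ j = some a)
      else (Finset.univ.filter fun j : I => μ j = some a).erase i := by
  split_ifs with h
  · ext j
    by_cases hj : j = i <;> simp [Function.update_apply, hj, h]
  · ext j
    by_cases hj : j = i <;> simp [Function.update_apply, hj, h]

lemma sdState_fst_apply (e : Fin (Fintype.card I) ≃ I) (P : I → LinearOrder (Option O))
    (q : O → ℕ) :
    ∀ (k : ℕ) (j : Fin (Fintype.card I)), (j : ℕ) < k →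
      (sdState e P q k).1 (e j) = sdChoice (P (e j)) (sdState e P q (j : ℕ)).2
  | 0, j, h => absurd h (Nat.not_lt_zero _)
  | k+1, j, h => by
    by_cases hk : k < Fintype.card I
    · have hfst : (sdState e P q (k+1)).1 = Function.update (sdState e P q k).1 (e ⟨k, hk⟩)
          (sdChoice (P (e ⟨k, hk⟩)) (sdState e P q k).2) := by
        simp [sdState, hk]
      rw [hfst]
      rcases Nat.lt_succ_iff_lt_or_eq.1 h with h' | h'
      · rw [Function.update_apply, if_neg, sdState_fst_apply e P q k j h']
        intro hc
        have hjk : (j : ℕ) = k := by rw [e.injective hc]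
        omega
      · obtain rfl : j = ⟨k, hk⟩ := Fin.ext h'
        rw [Function.update_self]
    · have hst : sdState e P q (k+1) = sdState e P q k := by simp [sdState, hk]
      rw [hst]
      exact sdState_fst_apply e P q k j (by have := j.isLt; omega)

lemma SD_apply (e : Fin (Fintype.card I) ≃ I) (P : I → LinearOrder (Option O))
    (q : O → ℕ) (j : Fin (Fintype.card I)) :
    SD e P q (e j) = sdChoice (P (e j)) (sdState e P q (j : ℕ)).2 :=
  sdState_fst_apply e P q _ j j.isLt

lemma sdState_congr (e e' : Fin (Fintype.card I) ≃ I) (P : I → LinearOrder (Option O))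
    (q : O → ℕ) :
    ∀ (k : ℕ), (∀ m : Fin (Fintype.card I), (m : ℕ) < k → e m = e' m) →
      sdState e P q k = sdState e' P q k
  | 0, _ => rfl
  | k+1, h => by
    have ih := sdState_congr e e' P q k (fun m hm => h m (by omega))
    by_cases hk : k < Fintype.card I
    · have hek : e ⟨k, hk⟩ = e' ⟨k, hk⟩ := h _ (Nat.lt_succ_self k)
      simp [sdState, hk, ih, hek]
    · simp [sdState, hk, ih]

lemma sdState_snd_eq (e : Fin (Fintype.card I) ≃ I) (P : I → LinearOrder (Option O))
    (q : O → ℕ) (μ : I → Option O) :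
    ∀ (k : ℕ), k ≤ Fintype.card I →
      (∀ j : Fin (Fintype.card I), (j : ℕ) < k →
        μ (e j) = sdChoice (P (e j)) (sdState e P q (j : ℕ)).2) →
      ∀ a : O, (sdState e P q k).2 a
        + (Finset.univ.filter fun j : Fin (Fintype.card I) =>
            (j : ℕ) < k ∧ μ (e j) = some a).card = q a
  | 0, _, _, a => by simp [sdState]
  | k+1, hk, hpre, a => by
    have hkn : k < Fintype.card I := hk
    have ih := sdState_snd_eq e P q μ k (by omega) (fun j hj => hpre j (by omega)) a
    have hμk : μ (e ⟨k, hkn⟩) = sdChoice (P (e ⟨k, hkn⟩)) (sdState e P q k).2 :=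
      hpre ⟨k, hkn⟩ (Nat.lt_succ_self k)
    have hsnd : (sdState e P q (k+1)).2 = fun b =>
        if sdChoice (P (e ⟨k, hkn⟩)) (sdState e P q k).2 = some b
        then (sdState e P q k).2 b - 1 else (sdState e P q k).2 b := by
      simp [sdState, hkn]
    have hset : (Finset.univ.filter fun j : Fin (Fintype.card I) =>
          (j : ℕ) < k+1 ∧ μ (e j) = some a)
        = if μ (e ⟨k, hkn⟩) = some a
          then insert ⟨k, hkn⟩ (Finset.univ.filter fun j : Fin (Fintype.card I) =>
            (j : ℕ) < k ∧ μ (e j) = some a)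
          else (Finset.univ.filter fun j : Fin (Fintype.card I) =>
            (j : ℕ) < k ∧ μ (e j) = some a) := by
      split_ifs with h
      · ext j
        simp only [Finset.mem_insert, Finset.mem_filter, Finset.mem_univ, true_and]
        constructor
        · rintro ⟨hj, hja⟩
          rcases Nat.lt_succ_iff_lt_or_eq.1 hj with h' | h'
          · exact Or.inr ⟨h', hja⟩
          · exact Or.inl (Fin.ext h')
        · rintro (rfl | ⟨hj, hja⟩)
          · exact ⟨Nat.lt_succ_self k, h⟩
          · exact ⟨by omega, hja⟩
      · ext j
        simp only [Finset.mem_filter, Finset.mem_univ, true_and]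
        constructor
        · rintro ⟨hj, hja⟩
          rcases Nat.lt_succ_iff_lt_or_eq.1 hj with h' | h'
          · exact ⟨h', hja⟩
          · exact absurd hja (by rw [show j = ⟨k, hkn⟩ from Fin.ext h']; exact h)
        · rintro ⟨hj, hja⟩
          exact ⟨by omega, hja⟩
    rw [hsnd, hset]
    beta_reduce
    by_cases h : μ (e ⟨k, hkn⟩) = some a
    · rw [if_pos h, if_pos (hμk ▸ h)]
      have hnotmem : (⟨k, hkn⟩ : Fin (Fintype.card I)) ∉
          (Finset.univ.filter fun j : Fin (Fintype.card I) =>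
            (j : ℕ) < k ∧ μ (e j) = some a) := by
        simp
      rw [Finset.card_insert_of_notMem hnotmem]
      have hpos : 0 < (sdState e P q k).2 a := sdChoice_pos _ (hμk ▸ h)
      omega
    · rw [if_neg h, if_neg (fun hc => h (hμk.trans hc))]
      exact ih

lemma prefix_card_lt (e : Fin (Fintype.card I) ≃ I) (μ : I → Option O) (q : O → ℕ)
    (hmatch : IsMatching q μ) (k : ℕ) (a : O) (i : I) (hia : μ i = some a)
    (hi : k ≤ (e.symm i : ℕ)) :
    (Finset.univ.filter fun j : Fin (Fintype.card I) =>
      (j : ℕ) < k ∧ μ (e j) = some a).card < q a := by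
  set S := Finset.univ.filter fun j : Fin (Fintype.card I) => (j : ℕ) < k ∧ μ (e j) = some a
  set A := S.image e with hA
  have hcardA : A.card = S.card := Finset.card_image_of_injective _ e.injective
  have hiA : i ∉ A := by
    intro hmem
    obtain ⟨j, hj, hje⟩ := Finset.mem_image.1 hmem
    have := (Finset.mem_filter.1 hj).2.1
    rw [← hje, Equiv.symm_apply_apply] at hi
    omega
  have hsub : insert i A ⊆ Finset.univ.filter fun i' : I => μ i' = some a := by
    intro x hx
    rcases Finset.mem_insert.1 hx with rfl | hx
    · simp [hia]
    · obtain ⟨j, hj, rfl⟩ := Finset.mem_image.1 hx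
      simp [(Finset.mem_filter.1 hj).2.2]
  have := Finset.card_le_card hsub
  rw [Finset.card_insert_of_notMem hiA, hcardA] at this
  have := hmatch a
  omega

lemma mem_avail (e : Fin (Fintype.card I) ≃ I) (P : I → LinearOrder (Option O))
    (q : O → ℕ) (μ : I → Option O) (hmatch : IsMatching q μ) (k : ℕ)
    (hk : k ≤ Fintype.card I)
    (hpre : ∀ j : Fin (Fintype.card I), (j : ℕ) < k →
      μ (e j) = sdChoice (P (e j)) (sdState e P q (j : ℕ)).2)
    (i : I) (hi : k ≤ (e.symm i : ℕ)) :
    μ i ∈ availSet (sdState e P q k).2 := by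
  cases hmi : μ i with
  | none => exact Finset.mem_insert_self _ _
  | some b =>
    refine mem_availSet_some.2 ?_
    have hsum := sdState_snd_eq e P q μ k hk hpre b
    have hlt := prefix_card_lt e μ q hmatch k b i hmi hi
    omega

lemma more_pop (w : I → ℝ) (hw : ∀ i, 0 < w i) (P : I → LinearOrder (Option O))
    (μ μ' : I → Option O) (i0 : I)
    (hi0 : Prefers (P i0) (μ' i0) (μ i0)) (L : Finset I)
    (hL : ∀ j : I, j ≠ i0 → Prefers (P j) (μ j) (μ' j) → j ∈ L)
    (hsum : ∑ j ∈ L, w j < w i0) : MoreWPopular w P μ' μ := by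
  unfold MoreWPopular
  have h1 : (∑ j ∈ Finset.univ.filter fun j : I => Prefers (P j) (μ j) (μ' j), w j)
      ≤ ∑ j ∈ L, w j := by
    apply Finset.sum_le_sum_of_subset_of_nonneg
    · intro j hj
      have hj' := (Finset.mem_filter.1 hj).2
      refine hL j (fun h => ?_) hj'
      subst h
      exact prefers_asymm _ hi0 hj'
    · intro j _ _
      exact (hw j).le
  have h2 : w i0 ≤ ∑ i ∈ Finset.univ.filter fun i : I => Prefers (P i) (μ' i) (μ i), w i := by
    apply Finset.single_le_sum (f := w) (fun i _ => (hw i).le)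
    simp [hi0]
  linarith

/-- If some assignment strictly preferred by `i0` never exceeds capacity, contradiction with
w-popularity. -/
lemma no_slack_move (w : I → ℝ) (hw : ∀ i, 0 < w i) (P : I → LinearOrder (Option O))
    (q : O → ℕ) (μ : I → Option O) (hμ : WPopular w P q μ) (i0 : I) (c : Option O)
    (hpref : Prefers (P i0) c (μ i0))
    (hok : ∀ a : O, c = some a →
      (Finset.univ.filter fun i : I => μ i = some a).card < q a) : False := by
  set μ' := Function.update μ i0 c with hμ'
  have hmatch' : IsMatching q μ' := by
    intro a
    rw [hμ', filter_update]
    split_ifs with h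
    · have := hok a h
      have := Finset.card_insert_le i0 (Finset.univ.filter fun j : I => μ j = some a)
      omega
    · exact le_trans (Finset.card_le_card (Finset.erase_subset _ _)) (hμ.1 a)
  refine hμ.2 μ' hmatch' (more_pop w hw P μ μ' i0 ?_ ∅ ?_ ?_)
  · rw [hμ', Function.update_self]
    exact hpref
  · intro j hj hpj
    rw [hμ', Function.update_of_ne hj] at hpj
    exact absurd hpj (fun h => prefers_irrefl _ h)
  · simpa using hw i0

/-- If object `a` is full in `μ` but has remaining SD capacity after the first `k` picks,
some occupant of `a` sits at position `≥ k`. -/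
lemma exists_late_occupant (e : Fin (Fintype.card I) ≃ I) (P : I → LinearOrder (Option O))
    (q : O → ℕ) (μ : I → Option O) (k : ℕ) (hk : k ≤ Fintype.card I)
    (hpre : ∀ j : Fin (Fintype.card I), (j : ℕ) < k →
      μ (e j) = sdChoice (P (e j)) (sdState e P q (j : ℕ)).2)
    (a : O) (hrem : 0 < (sdState e P q k).2 a)
    (hfull : q a ≤ (Finset.univ.filter fun i : I => μ i = some a).card) :
    ∃ i : I, μ i = some a ∧ k ≤ (e.symm i : ℕ) := by
  have hsum := sdState_snd_eq e P q μ k hk hpre a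
  set S := Finset.univ.filter fun j : Fin (Fintype.card I) => (j : ℕ) < k ∧ μ (e j) = some a
  set A := S.image e with hA
  set F := Finset.univ.filter fun i : I => μ i = some a
  have hsubA : A ⊆ F := by
    intro x hx
    obtain ⟨j, hj, rfl⟩ := Finset.mem_image.1 hx
    simp [F, (Finset.mem_filter.1 hj).2.2]
  have hcardA : A.card = S.card := Finset.card_image_of_injective _ e.injective
  have hlt : A.card < F.card := by omega
  obtain ⟨i, hiF, hiA⟩ : ∃ i, i ∈ F ∧ i ∉ A := by
    by_contra hcon
    push_neg at hcon
    exact absurd (Finset.card_le_card fun x hx => hcon x hx) (by omega)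
  have hia : μ i = some a := (Finset.mem_filter.1 hiF).2
  refine ⟨i, hia, ?_⟩
  by_contra hcon
  push_neg at hcon
  apply hiA
  rw [hA]
  refine Finset.mem_image.2 ⟨e.symm i, ?_, Equiv.apply_symm_apply e i⟩
  simp only [S, Finset.mem_filter, Finset.mem_univ, true_and]
  exact ⟨hcon, by rw [Equiv.apply_symm_apply]; exact hia⟩

/-- Workhorse: a w-popular matching gives agent at position `k` her SD choice, provided
all strictly later agents are strictly lighter. -/
lemma workhorse (w : I → ℝ) (hw : ∀ i, 0 < w i) (P : I → LinearOrder (Option O))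
    (q : O → ℕ) (μ : I → Option O) (hμ : WPopular w P q μ)
    (e : Fin (Fintype.card I) ≃ I) (k : Fin (Fintype.card I))
    (hpre : ∀ j : Fin (Fintype.card I), (j : ℕ) < (k : ℕ) →
      μ (e j) = sdChoice (P (e j)) (sdState e P q (j : ℕ)).2)
    (hH : ∀ i : I, (k : ℕ) < (e.symm i : ℕ) → w i < w (e k)) :
    μ (e k) = sdChoice (P (e k)) (sdState e P q (k : ℕ)).2 := by
  by_contra hne
  set c := sdChoice (P (e k)) (sdState e P q (k : ℕ)).2 with hc
  have hmem : μ (e k) ∈ availSet (sdState e P q (k : ℕ)).2 :=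
    mem_avail e P q μ hμ.1 (k : ℕ) k.isLt.le hpre (e k)
      (by rw [Equiv.symm_apply_apply])
  have hpref : Prefers (P (e k)) c (μ (e k)) := lt_sdChoice _ _ hmem hne
  by_cases hslack : ∀ a : O, c = some a →
      (Finset.univ.filter fun i : I => μ i = some a).card < q a
  · exact no_slack_move w hw P q μ hμ (e k) c hpref hslack
  push_neg at hslack
  obtain ⟨a, hca, hfull⟩ := hslack
  have hca' : sdChoice (P (e k)) (sdState e P q (k : ℕ)).2 = some a := by
    rw [← hc]; exact hca
  have hrem : 0 < (sdState e P q (k : ℕ)).2 a := sdChoice_pos _ hca'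
  obtain ⟨i', hi'a, hi'k⟩ := exists_late_occupant e P q μ (k : ℕ) k.isLt.le hpre a hrem hfull
  have hi'ne : i' ≠ e k := by
    intro h
    rw [h] at hi'a
    exact hne (by rw [hi'a, ← hca])
  have hi'gt : (k : ℕ) < (e.symm i' : ℕ) := by
    rcases lt_or_eq_of_le hi'k with h | h
    · exact h
    · exfalso
      apply hi'ne
      have : e.symm i' = k := Fin.ext h.symm
      rw [← this, Equiv.apply_symm_apply]
  have hwlt : w i' < w (e k) := hH i' hi'gt
  set μ' := Function.update (Function.update μ (e k) c) i' none with hμ'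
  have hekne : e k ≠ i' := fun h => hi'ne h.symm
  have hmatch' : IsMatching q μ' := by
    intro b
    rw [hμ', filter_update, if_neg (by simp), filter_update]
    split_ifs with h
    · have hab : a = b := by rw [hca] at h; exact Option.some.inj h
      subst hab
      have hi'F : i' ∈ Finset.univ.filter fun i : I => μ i = some a := by simp [hi'a]
      have hi'ins : i' ∈ insert (e k) (Finset.univ.filter fun i : I => μ i = some a) :=
        Finset.mem_insert_of_mem hi'F
      rw [Finset.card_erase_of_mem hi'ins]
      have := Finset.card_insert_le (e k) (Finset.univ.filter fun i : I => μ i = some a)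
      have := hμ.1 a
      omega
    · exact le_trans (Finset.card_le_card (Finset.erase_subset _ _))
        (le_trans (Finset.card_le_card (Finset.erase_subset _ _)) (hμ.1 b))
  refine hμ.2 μ' hmatch' (more_pop w hw P μ μ' (e k) ?_ {i'} ?_ ?_)
  · rw [hμ', Function.update_of_ne hekne, Function.update_self]
    exact hpref
  · intro j hj hpj
    by_cases hji' : j = i'
    · simp [hji']
    · rw [hμ', Function.update_of_ne hji', Function.update_of_ne hj] at hpj
      exact absurd hpj (fun h => prefers_irrefl _ h)
  · simpa using hwlt

lemma consistent_of_dec (w : I → ℝ) (e : Fin (Fintype.card I) ≃ I)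
    (he : DecreasingEnum w e) : ConsistentOrder w e := by
  intro i j hwij
  by_contra h
  push_neg at h
  have := he (e.symm j) (e.symm i) h
  rw [Equiv.apply_symm_apply, Equiv.apply_symm_apply] at this
  linarith

lemma sd_prefix (w : I → ℝ) (hw : ∀ i, 0 < w i) (P : I → LinearOrder (Option O))
    (q : O → ℕ) (μ : I → Option O) (hμ : WPopular w P q μ)
    (e : Fin (Fintype.card I) ≃ I) (K : ℕ)
    (hstrict : ∀ j : Fin (Fintype.card I), (j : ℕ) < K →
      ∀ i : I, (j : ℕ) < (e.symm i : ℕ) → w i < w (e j)) :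
    ∀ j : Fin (Fintype.card I), (j : ℕ) < K →
      μ (e j) = sdChoice (P (e j)) (sdState e P q (j : ℕ)).2 := by
  have main : ∀ m : ℕ, ∀ j : Fin (Fintype.card I), (j : ℕ) = m → (j : ℕ) < K →
      μ (e j) = sdChoice (P (e j)) (sdState e P q (j : ℕ)).2 := by
    intro m
    induction m using Nat.strong_induction_on with
    | _ m ih =>
      intro j hjm hjK
      exact workhorse w hw P q μ hμ e j
        (fun j' hj' => ih (j' : ℕ) (by omega) j' rfl (by omega))
        (fun i hi => hstrict j hjK i hi)
  exact fun j hj => main (j : ℕ) j rfl hj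

lemma eq_SD_of_all (e : Fin (Fintype.card I) ≃ I) (P : I → LinearOrder (Option O))
    (q : O → ℕ) (μ : I → Option O)
    (h : ∀ j : Fin (Fintype.card I), μ (e j) = sdChoice (P (e j)) (sdState e P q (j : ℕ)).2) :
    μ = SD e P q := by
  funext i
  have h' := h (e.symm i)
  rw [Equiv.apply_symm_apply] at h'
  rw [h']
  have h2 := SD_apply e P q (e.symm i)
  rw [Equiv.apply_symm_apply] at h2
  exact h2.symm

end Aux


/-- If the weights are distinct or essentially distinct, every w-popular
matching is the outcome of some serial dictatorship consistent with the weights. -/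
theorem stmt10 {I O : Type} [Fintype I] [Fintype O]
    (hI : 3 ≤ Fintype.card I) (hIO : Fintype.card I ≤ Fintype.card O)
    (w : I → ℝ) (hw : ∀ i, 0 < w i)
    (e : Fin (Fintype.card I) ≃ I) (he : DecreasingEnum w e)
    (hde : DistinctWeights w ∨ EssentiallyDistinct w e)
    (P : I → LinearOrder (Option O)) (q : O → ℕ) (hq : ValidCaps q)
    (μ : I → Option O) (hμ : WPopular w P q μ) :
    ∃ e' : Fin (Fintype.card I) ≃ I, ConsistentOrder w e' ∧ μ = SD e' P q := by
  classical
  rcases hde with hdist | hess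
  · -- distinct weights: the decreasing enumeration itself works
    refine ⟨e, consistent_of_dec w e he, eq_SD_of_all e P q μ ?_⟩
    have hstrict : ∀ j : Fin (Fintype.card I), (j : ℕ) < (Fintype.card I) → ∀ i : I, (j : ℕ) < (e.symm i : ℕ) →
        w i < w (e j) := by
      intro j _ i hi
      have hle : w (e (e.symm i)) ≤ w (e j) := he j (e.symm i) (Fin.le_def.mpr (le_of_lt hi))
      rw [Equiv.apply_symm_apply] at hle
      refine lt_of_le_of_ne hle fun heq => ?_
      have hij : i = e j := hdist heq
      rw [hij, Equiv.symm_apply_apply] at hi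
      omega
    exact fun j => sd_prefix w hw P q μ hμ e (Fintype.card I) hstrict j j.isLt
  · -- essentially distinct
    have hN3 : 3 ≤ (Fintype.card I) := hI
    set a2 : Fin (Fintype.card I) := ⟨(Fintype.card I) - 2, by omega⟩ with ha2
    set a1 : Fin (Fintype.card I) := ⟨(Fintype.card I) - 1, by omega⟩ with ha1
    have hlastw : w (e a2) = w (e a1) :=
      hess.2.1 a2 a1 (by show (Fintype.card I) - 2 + 2 = (Fintype.card I); omega) (by show (Fintype.card I) - 1 + 1 = (Fintype.card I); omega)
    have hstrict : ∀ j : Fin (Fintype.card I), (j : ℕ) < (Fintype.card I) - 2 → ∀ i : I, (j : ℕ) < (e.symm i : ℕ) →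
        w i < w (e j) := by
      intro j hj i hi
      have key : w (e (e.symm i)) < w (e j) := by
        by_cases hm : ((e.symm i : Fin (Fintype.card I)) : ℕ) + 2 ≤ (Fintype.card I)
        · refine lt_of_le_of_ne (he j (e.symm i) (Fin.le_def.mpr (le_of_lt hi))) ?_
          exact fun h => hess.1 j (e.symm i) (Fin.lt_def.mpr hi) hm h.symm
        · have h2 : w (e a2) = w (e (e.symm i)) :=
            hess.2.1 a2 (e.symm i) (by show (Fintype.card I) - 2 + 2 = (Fintype.card I); omega)
              (by have := (e.symm i).isLt; omega)
          rw [← h2]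
          refine lt_of_le_of_ne (he j a2 (Fin.le_def.mpr (by show (j : ℕ) ≤ (Fintype.card I) - 2; omega))) ?_
          exact fun h => hess.1 j a2 (Fin.lt_def.mpr (by show (j : ℕ) < (Fintype.card I) - 2; exact hj))
            (by show (Fintype.card I) - 2 + 2 ≤ (Fintype.card I); omega) h.symm
      rwa [Equiv.apply_symm_apply] at key
    have hpre : ∀ j : Fin (Fintype.card I), (j : ℕ) < (Fintype.card I) - 2 →
        μ (e j) = sdChoice (P (e j)) (sdState e P q (j : ℕ)).2 :=
      sd_prefix w hw P q μ hμ e ((Fintype.card I) - 2) hstrict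
    by_cases hA : μ (e a2) = sdChoice (P (e a2)) (sdState e P q ((Fintype.card I) - 2)).2
    · -- the enumeration e itself works
      refine ⟨e, consistent_of_dec w e he, eq_SD_of_all e P q μ ?_⟩
      intro j
      have hpre1 : ∀ j' : Fin (Fintype.card I), (j' : ℕ) < (Fintype.card I) - 1 →
          μ (e j') = sdChoice (P (e j')) (sdState e P q (j' : ℕ)).2 := by
        intro j' hj'
        by_cases h : (j' : ℕ) < (Fintype.card I) - 2
        · exact hpre j' h
        · have hj2 : j' = a2 := Fin.ext (by show (j' : ℕ) = (Fintype.card I) - 2; omega)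
          rw [hj2]
          exact hA
      by_cases h1 : (j : ℕ) < (Fintype.card I) - 1
      · exact hpre1 j h1
      · have hj1 : j = a1 := Fin.ext (by have := j.isLt; show (j : ℕ) = (Fintype.card I) - 1; omega)
        rw [hj1]
        exact workhorse w hw P q μ hμ e a1 (fun j' hj' => hpre1 j' hj')
          (fun i hi => absurd hi (by
            have h := (e.symm i).isLt
            have h11 : ((a1 : Fin (Fintype.card I)) : ℕ) = Fintype.card I - 1 := rfl
            omega))
    · by_cases hB : μ (e a1) = sdChoice (P (e a1)) (sdState e P q ((Fintype.card I) - 2)).2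
      · -- the enumeration with the last two agents swapped works
        set e' : Fin (Fintype.card I) ≃ I := (Equiv.swap a2 a1).trans e with he'def
        have he'app : ∀ x : Fin (Fintype.card I), e' x = e (Equiv.swap a2 a1 x) := fun x => rfl
        have hfix : ∀ m : Fin (Fintype.card I), (m : ℕ) < (Fintype.card I) - 2 → e' m = e m := by
          intro m hm
          rw [he'app, Equiv.swap_apply_of_ne_of_ne]
          · exact fun h => absurd (congrArg Fin.val h) (by show ¬ (m : ℕ) = (Fintype.card I) - 2; omega)
          · exact fun h => absurd (congrArg Fin.val h) (by show ¬ (m : ℕ) = (Fintype.card I) - 1; omega)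
        have hstate : ∀ k : ℕ, k ≤ (Fintype.card I) - 2 → sdState e' P q k = sdState e P q k :=
          fun k hk => (sdState_congr e e' P q k (fun m hm => (hfix m (by omega)).symm)).symm
        have hwe' : ∀ x : Fin (Fintype.card I), w (e' x) = w (e x) := by
          intro x
          rw [he'app]
          by_cases hx2 : x = a2
          · rw [hx2, Equiv.swap_apply_left]
            exact hlastw.symm
          · by_cases hx1 : x = a1
            · rw [hx1, Equiv.swap_apply_right]
              exact hlastw
            · rw [Equiv.swap_apply_of_ne_of_ne hx2 hx1]
        have hdec' : DecreasingEnum w e' := fun j k hjk => by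
          rw [hwe', hwe']
          exact he j k hjk
        refine ⟨e', consistent_of_dec w e' hdec', eq_SD_of_all e' P q μ ?_⟩
        intro j
        have hpre1' : ∀ j' : Fin (Fintype.card I), (j' : ℕ) < (Fintype.card I) - 1 →
            μ (e' j') = sdChoice (P (e' j')) (sdState e' P q (j' : ℕ)).2 := by
          intro j' hj'
          by_cases h : (j' : ℕ) < (Fintype.card I) - 2
          · rw [hfix j' h, hstate (j' : ℕ) (by omega)]
            exact hpre j' h
          · have hj2 : j' = a2 := Fin.ext (by show (j' : ℕ) = (Fintype.card I) - 2; omega)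
            rw [hj2]
            have hswap : e' a2 = e a1 := by rw [he'app, Equiv.swap_apply_left]
            have ha2v : ((a2 : Fin (Fintype.card I)) : ℕ) = (Fintype.card I) - 2 := rfl
            rw [hswap, ha2v, hstate ((Fintype.card I) - 2) le_rfl]
            exact hB
        by_cases h1 : (j : ℕ) < (Fintype.card I) - 1
        · exact hpre1' j h1
        · have hj1 : j = a1 := Fin.ext (by have := j.isLt; show (j : ℕ) = (Fintype.card I) - 1; omega)
          rw [hj1]
          exact workhorse w hw P q μ hμ e' a1 (fun j' hj' => hpre1' j' hj')
            (fun i hi => absurd hi (by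
              have h := (e'.symm i).isLt
              have h11 : ((a1 : Fin (Fintype.card I)) : ℕ) = Fintype.card I - 1 := rfl
              omega))
      · -- both fail: contradiction with w-popularity
        exfalso
        set rem := (sdState e P q ((Fintype.card I) - 2)).2 with hrem
        set c := sdChoice (P (e a2)) rem with hcdef
        set c' := sdChoice (P (e a1)) rem with hc'def
        have hmem2 : μ (e a2) ∈ availSet rem :=
          mem_avail e P q μ hμ.1 ((Fintype.card I) - 2) (by omega) hpre (e a2)
            (by rw [Equiv.symm_apply_apply])
        have hmem1 : μ (e a1) ∈ availSet rem :=
          mem_avail e P q μ hμ.1 ((Fintype.card I) - 2) (by omega) hpre (e a1)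
            (by rw [Equiv.symm_apply_apply]; show (Fintype.card I) - 2 ≤ (Fintype.card I) - 1; omega)
        have hpref2 : Prefers (P (e a2)) c (μ (e a2)) := lt_sdChoice _ _ hmem2 hA
        have hpref1 : Prefers (P (e a1)) c' (μ (e a1)) := lt_sdChoice _ _ hmem1 hB
        -- c must be full, and its late occupant must be e a1
        have hnoslack : ¬ ∀ a : O, c = some a →
            (Finset.univ.filter fun i : I => μ i = some a).card < q a :=
          fun hok => no_slack_move w hw P q μ hμ (e a2) c hpref2 hok
        push_neg at hnoslack
        obtain ⟨ca, hca, hfull⟩ := hnoslack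
        have hremca : 0 < rem ca := sdChoice_pos _ (hcdef ▸ hca)
        obtain ⟨i', hi'a, hi'k⟩ :=
          exists_late_occupant e P q μ ((Fintype.card I) - 2) (by omega) hpre ca hremca hfull
        have hi'ne : i' ≠ e a2 := by
          intro h
          apply hA
          rw [← h, hca]
          exact hi'a
        have hi'eq : e.symm i' = a1 := by
          have hlt := (e.symm i').isLt
          have hne2 : (e.symm i' : ℕ) ≠ (Fintype.card I) - 2 := by
            intro h
            apply hi'ne
            have : e.symm i' = a2 := Fin.ext h
            rw [← this, Equiv.apply_symm_apply]
          apply Fin.ext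
          show _ = (Fintype.card I) - 1
          omega
        have hμ1 : μ (e a1) = some ca := by
          rw [← hi'eq, Equiv.apply_symm_apply]
          exact hi'a
        have hchain : Prefers (P (e a1)) c' c := by
          have h := hpref1
          rw [hμ1, ← hca] at h
          exact h
        have hcc' : c ≠ c' := fun h => prefers_irrefl _ (h ▸ hchain)
        -- c' must be full, and its late occupant must be e a2
        have hnoslack' : ¬ ∀ a : O, c' = some a →
            (Finset.univ.filter fun i : I => μ i = some a).card < q a :=
          fun hok => no_slack_move w hw P q μ hμ (e a1) c' hpref1 hok
        push_neg at hnoslack'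
        obtain ⟨ca', hca', hfull'⟩ := hnoslack'
        have hremca' : 0 < rem ca' := sdChoice_pos _ (hc'def ▸ hca')
        obtain ⟨i'', hi''a, hi''k⟩ :=
          exists_late_occupant e P q μ ((Fintype.card I) - 2) (by omega) hpre ca' hremca' hfull'
        have hcane : ca ≠ ca' := by
          intro h
          apply hcc'
          rw [hca, hca', h]
        have hi''ne : i'' ≠ e a1 := by
          intro h
          rw [h, hμ1] at hi''a
          exact hcane (Option.some.inj hi''a)
        have hi''eq : e.symm i'' = a2 := by
          have hlt := (e.symm i'').isLt
          have hne1 : (e.symm i'' : ℕ) ≠ (Fintype.card I) - 1 := by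
            intro h
            apply hi''ne
            have : e.symm i'' = a1 := Fin.ext h
            rw [← this, Equiv.apply_symm_apply]
          apply Fin.ext
          show _ = (Fintype.card I) - 2
          omega
        have hμ2 : μ (e a2) = some ca' := by
          rw [← hi''eq, Equiv.apply_symm_apply]
          exact hi''a
        -- swap the last two agents' assignments: both strictly improve
        have hne21 : e a2 ≠ e a1 := by
          intro h
          have := congrArg Fin.val (e.injective h)
          have h22 : ((a2 : Fin (Fintype.card I)) : ℕ) = (Fintype.card I) - 2 := rfl
          have h11 : ((a1 : Fin (Fintype.card I)) : ℕ) = (Fintype.card I) - 1 := rfl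
          omega
        set μ'' := Function.update (Function.update μ (e a2) c) (e a1) c' with hμ''def
        have hmatch'' : IsMatching q μ'' := by
          intro b
          rw [hμ''def, filter_update, filter_update]
          split_ifs with h1 h2 h2
          · exact absurd (h2.trans h1.symm) hcc'
          · -- c' = some b, c ≠ some b : insert (e a1) (erase (e a2) F)
            have hbca' : b = ca' := Option.some.inj (hca' ▸ h1.symm)
            have hmem : e a2 ∈ Finset.univ.filter fun i : I => μ i = some b := by
              simp [hμ2, hbca']
            have hle := Finset.card_insert_le (e a1)
              ((Finset.univ.filter fun i : I => μ i = some b).erase (e a2))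
            rw [Finset.card_erase_of_mem hmem] at hle
            have hcard1 : 1 ≤ (Finset.univ.filter fun i : I => μ i = some b).card :=
              Finset.card_pos.mpr ⟨e a2, hmem⟩
            have := hμ.1 b
            omega
          · -- c = some b, c' ≠ some b : erase (e a1) (insert (e a2) F)
            have hbca : b = ca := Option.some.inj (hca ▸ h2.symm)
            have hmem : e a1 ∈ insert (e a2) (Finset.univ.filter fun i : I => μ i = some b) := by
              refine Finset.mem_insert_of_mem ?_
              simp [hμ1, hbca]
            rw [Finset.card_erase_of_mem hmem]
            have hle := Finset.card_insert_le (e a2)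
              (Finset.univ.filter fun i : I => μ i = some b)
            have := hμ.1 b
            omega
          · exact le_trans (Finset.card_le_card (Finset.erase_subset _ _))
              (le_trans (Finset.card_le_card (Finset.erase_subset _ _)) (hμ.1 b))
        refine hμ.2 μ'' hmatch'' (more_pop w hw P μ μ'' (e a2) ?_ ∅ ?_ ?_)
        · rw [hμ''def, Function.update_of_ne hne21, Function.update_self]
          exact hpref2
        · intro j hj hpj
          by_cases hj1 : j = e a1
          · exfalso
            have hval : μ'' j = c' := by
              rw [hμ''def, hj1, Function.update_self]
            rw [hval, hj1, hμ1, ← hca] at hpj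
            exact prefers_asymm _ hchain hpj
          · exfalso
            rw [hμ''def, Function.update_of_ne hj1, Function.update_of_ne hj] at hpj
            exact prefers_irrefl _ hpj
        · simpa using hw (e a2)
end

section
/- If the weight profile w is neither distinct nor essentially distinct, then no mechanism that admits a Nash equilibrium at every problem is w-popular in equilibrium. -/
open scoped Classical

/-! Equilibrium outcomes of a mechanism that is w-popular in equilibrium are Pareto optimal: if a
matching `τ` Pareto improves on the outcome, let every agent rank her assignment under `τ` first
and her current assignment second. The equilibrium survives this change of true preferences,
`τ` becomes w-popular, so the outcome must be w-popular too, yet `τ` is more w-popular than it.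

Weights that are neither distinct nor essentially distinct yield agents `x, y, z` with
`w y = w z` and `w x < w y + w z`. Let these three rank `a` over `b` over `∅` (both of capacity
one) while nobody else accepts anything. By Pareto optimality the equilibrium outcome gives `a`
to some `α`, `b` to some `β` and nothing to the third agent `γ`. Now let `α` accept only `a` and
`γ` accept only `b`: the equilibrium survives, a w-popular matching exists, and passing `a` to `β`
and `b` to `γ` is more w-popular than the outcome, since `w α < w β + w γ`. -/

open Finset Function

section RankedPref

variable {O : Type} [Fintype O]

noncomputable def rankKey (p₁ p₂ v : Option O) : ℕ :=
  if v = p₁ then Fintype.card (Option O) + 2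
  else if v = p₂ then Fintype.card (Option O) + 1
  else if v = none then Fintype.card (Option O)
  else Fintype.equivFin (Option O) v

theorem rankKey_injective (p₁ p₂ : Option O) : Injective (rankKey p₁ p₂) := by
  intro u v huv
  have hu := (Fintype.equivFin (Option O) u).is_lt
  have hv := (Fintype.equivFin (Option O) v).is_lt
  unfold rankKey at huv
  split_ifs at huv <;> first
    | (subst_vars; rfl)
    | omega
    | exact (Fintype.equivFin (Option O)).injective (Fin.ext huv)

/-- The strict preference ranking `p₁` first, `p₂` second, then `∅`, then all other objects. -/
noncomputable abbrev rankedPref (p₁ p₂ : Option O) : LinearOrder (Option O) :=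
  LinearOrder.lift' (rankKey p₁ p₂) (rankKey_injective p₁ p₂)

variable {p₁ p₂ u v : Option O}

theorem prefers_rankedPref_iff :
    Prefers (rankedPref p₁ p₂) u v ↔ rankKey p₁ p₂ v < rankKey p₁ p₂ u :=
  Iff.rfl

theorem not_prefers_rankedPref_first : ¬ Prefers (rankedPref p₁ p₂) v p₁ := by
  have := (Fintype.equivFin (Option O) v).is_lt
  rw [prefers_rankedPref_iff]; unfold rankKey; split_ifs <;> first | omega | simp_all

theorem prefers_rankedPref_first (h : v ≠ p₁) : Prefers (rankedPref p₁ p₂) p₁ v := by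
  have := (Fintype.equivFin (Option O) v).is_lt
  rw [prefers_rankedPref_iff]; unfold rankKey; split_ifs <;> first | omega | simp_all

theorem prefers_rankedPref_second (h₁ : v ≠ p₁) (h₂ : v ≠ p₂) :
    Prefers (rankedPref p₁ p₂) p₂ v := by
  have := (Fintype.equivFin (Option O) v).is_lt
  rw [prefers_rankedPref_iff]; unfold rankKey; split_ifs <;> first | omega | simp_all

theorem prefers_rankedPref_none (h₁ : v ≠ p₁) (h₂ : v ≠ p₂) (h₃ : v ≠ none) :
    Prefers (rankedPref p₁ p₂) none v := by
  have := (Fintype.equivFin (Option O) v).is_lt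
  rw [prefers_rankedPref_iff]; unfold rankKey; split_ifs <;> first | omega | simp_all

theorem eq_first_of_prefers_rankedPref_second (h : Prefers (rankedPref p₁ p₂) v p₂) :
    v = p₁ := by
  have := (Fintype.equivFin (Option O) v).is_lt
  rw [prefers_rankedPref_iff] at h; unfold rankKey at h
  split_ifs at h <;> first | omega | simp_all

theorem eq_first_or_second_of_prefers_rankedPref_none (h : Prefers (rankedPref p₁ p₂) v none) :
    v = p₁ ∨ v = p₂ := by
  have := (Fintype.equivFin (Option O) v).is_lt
  rw [prefers_rankedPref_iff] at h; unfold rankKey at h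
  split_ifs at h <;> first | omega | simp_all

end RankedPref

section Popularity

variable {I O : Type} [Fintype I] {w : I → ℝ} {P : I → LinearOrder (Option O)}
  {μ μ' : I → Option O}

theorem sum_filter_le_of_forall_eq (hw : ∀ i, 0 ≤ w i) {p : I → Prop} {i : I}
    (h : ∀ j, p j → j = i) : ∑ j ∈ univ.filter p, w j ≤ w i := by
  calc ∑ j ∈ univ.filter p, w j ≤ ∑ j ∈ {i}, w j :=
        sum_le_sum_of_subset_of_nonneg (fun j hj => mem_singleton.2 (h j (mem_filter.1 hj).2))
          fun j _ _ => hw j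
    _ = w i := sum_singleton _ _

theorem not_moreWPopular_of_forall_not_prefers (hw : ∀ i, 0 ≤ w i)
    (h : ∀ j, ¬ Prefers (P j) (μ' j) (μ j)) : ¬ MoreWPopular w P μ' μ := by
  unfold MoreWPopular
  rw [filter_false_of_mem fun j _ => h j, sum_empty, not_lt]
  exact sum_nonneg fun j _ => hw j

theorem not_moreWPopular_of_unique_gainer (hw : ∀ i, 0 ≤ w i) (i : I)
    (hgain : ∀ j, Prefers (P j) (μ' j) (μ j) → j = i)
    (hloss : Prefers (P i) (μ' i) (μ i) → ∃ k, w i ≤ w k ∧ Prefers (P k) (μ k) (μ' k)) :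
    ¬ MoreWPopular w P μ' μ := by
  by_cases hi : Prefers (P i) (μ' i) (μ i)
  · obtain ⟨k, hik, hk⟩ := hloss hi
    unfold MoreWPopular
    rw [not_lt]
    calc ∑ j ∈ univ.filter _, w j ≤ w i := sum_filter_le_of_forall_eq hw hgain
      _ ≤ w k := hik
      _ ≤ _ := single_le_sum (fun j _ => hw j) (mem_filter.2 ⟨mem_univ k, hk⟩)
  · exact not_moreWPopular_of_forall_not_prefers hw fun j hj => hi (hgain j hj ▸ hj)

theorem moreWPopular_of_forall_not_prefers (hw : ∀ i, 0 ≤ w i)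
    (h : ∀ j, ¬ Prefers (P j) (μ j) (μ' j)) {i : I} (hi : Prefers (P i) (μ' i) (μ i))
    (hwi : 0 < w i) : MoreWPopular w P μ' μ := by
  unfold MoreWPopular
  rw [filter_false_of_mem fun j _ => h j, sum_empty]
  exact hwi.trans_le (single_le_sum (fun j _ => hw j) (mem_filter.2 ⟨mem_univ i, hi⟩))

theorem moreWPopular_of_unique_loser (hw : ∀ i, 0 ≤ w i) {α β γ : I}
    (hloss : ∀ j, Prefers (P j) (μ j) (μ' j) → j = α) (hβγ : β ≠ γ)
    (hβ : Prefers (P β) (μ' β) (μ β)) (hγ : Prefers (P γ) (μ' γ) (μ γ))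
    (hwt : w α < w β + w γ) : MoreWPopular w P μ' μ := by
  unfold MoreWPopular
  calc ∑ j ∈ univ.filter _, w j ≤ w α := sum_filter_le_of_forall_eq hw hloss
    _ < w β + w γ := hwt
    _ = ∑ j ∈ {β, γ}, w j := (sum_pair hβγ).symm
    _ ≤ _ := sum_le_sum_of_subset_of_nonneg
        (by simp [insert_subset_iff, hβ, hγ]) fun j _ _ => hw j

end Popularity

section PairAssign

variable {I O : Type} {i j k : I} {a b : O}

noncomputable def pairAssign (i : I) (a : O) (j : I) (b : O) : I → Option O :=
  update (update (fun _ => none) i (some a)) j (some b)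

@[simp] theorem pairAssign_apply_right : pairAssign i a j b j = some b := by
  simp [pairAssign]

@[simp] theorem pairAssign_apply_left (h : i ≠ j) : pairAssign i a j b i = some a := by
  simp [pairAssign, h]

@[simp] theorem pairAssign_apply_of_ne (hi : k ≠ i) (hj : k ≠ j) :
    pairAssign i a j b k = none := by
  simp [pairAssign, hi, hj]

end PairAssign

section Matching

variable {I O : Type} [Fintype I] {q : O → ℕ} {μ : I → Option O}

theorem IsMatching.ne_some_of_eq_some (hμ : IsMatching q μ) {c : O} (hc : q c = 1) {i j : I}
    (hij : i ≠ j) (hi : μ i = some c) : μ j ≠ some c := by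
  intro hj
  have hsub : ({i, j} : Finset I) ⊆ univ.filter fun k => μ k = some c := by
    simp [insert_subset_iff, hi, hj]
  have := card_le_card hsub
  rw [card_pair hij] at this
  have := hμ c
  omega

theorem filter_update_eq_some_subset (μ : I → Option O) (i : I) (v : Option O) (c : O) :
    univ.filter (fun j => update μ i v j = some c) ⊆
      insert i (univ.filter fun j => μ j = some c) := by
  intro j hj
  rcases eq_or_ne j i with rfl | hji
  · exact mem_insert_self _ _
  · simp_all

theorem filter_update_eq_some_subset_of_ne {v : Option O} {c : O} (h : v ≠ some c) (i : I) :
    univ.filter (fun j => update μ i v j = some c) ⊆ univ.filter fun j => μ j = some c := by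
  intro j
  by_cases hji : j = i <;> simp_all

theorem isMatching_const_none (q : O → ℕ) : IsMatching q (fun _ : I => none) := fun c => by
  simp

theorem IsMatching.update_none (hμ : IsMatching q μ) (i : I) : IsMatching q (update μ i none) :=
  fun c => (card_le_card (filter_update_eq_some_subset_of_ne (by simp) i)).trans (hμ c)

theorem IsMatching.update_some (hμ : IsMatching q μ) {c : O}
    (hc : (univ.filter fun j => μ j = some c).card < q c) (i : I) :
    IsMatching q (update μ i (some c)) := by
  intro d
  rcases eq_or_ne d c with rfl | hdc
  · exact (card_le_card (filter_update_eq_some_subset μ i _ d)).trans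
      ((card_insert_le _ _).trans hc)
  · exact (card_le_card (filter_update_eq_some_subset_of_ne (by simpa using hdc.symm) i)).trans
      (hμ d)

theorem card_filter_eq_some_lt {c : O} (hq : 1 ≤ q c) (h : ∀ j, μ j ≠ some c) :
    (univ.filter fun j => μ j = some c).card < q c := by
  rw [filter_false_of_mem fun j _ => h j, card_empty]
  exact hq

theorem isMatching_pairAssign (hq : ValidCaps q) (i : I) {a b : O} (hab : a ≠ b) (j : I) :
    IsMatching q (pairAssign i a j b) := by
  refine ((isMatching_const_none q).update_some ?_ i).update_some ?_ j
  · exact card_filter_eq_some_lt (hq a) fun _ => (Option.some_ne_none a).symm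
  · refine card_filter_eq_some_lt (hq b) fun k => ?_
    rw [update_apply]
    split_ifs <;> simp [hab]

end Matching

section Reports

variable {I O : Type} {ψ : Mechanism I O} {P P' : I → LinearOrder (Option O)} {q : O → ℕ}

theorem NashEq.of_upperContour_subset {P₂ : I → LinearOrder (Option O)} (h : NashEq ψ P q P')
    (hP : ∀ i v, Prefers (P₂ i) v (ψ P' q i) → Prefers (P i) v (ψ P' q i)) :
    NashEq ψ P₂ q P' :=
  fun i P''i hpref => h i P''i (hP i _ hpref)

theorem paretoImproves_update {μ : I → Option O} {i : I} {v : Option O}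
    (h : Prefers (P i) v (μ i)) : ParetoImproves P (update μ i v) μ := by
  refine ⟨fun j => ?_, i, by simpa using h⟩
  let := P j
  rcases eq_or_ne j i with rfl | hji
  · simpa using h.le
  · simp [hji]

end Reports

section Equilibrium

variable {I O : Type} [Fintype I] [Fintype O] {w : I → ℝ} {ψ : Mechanism I O}
  {P P' : I → LinearOrder (Option O)} {q : O → ℕ}

theorem WPopularInEquilibrium.not_paretoImproves_of_nashEq (hw : ∀ i, 0 < w i)
    (hψ : WPopularInEquilibrium w ψ) (hq : ValidCaps q) (hne : NashEq ψ P q P')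
    {τ : I → Option O} (hτ : IsMatching q τ) : ¬ ParetoImproves P τ (ψ P' q) := by
  rintro ⟨hle, j₀, hj₀⟩
  set μ := ψ P' q
  let P₂ : I → LinearOrder (Option O) := fun i => rankedPref (τ i) (μ i)
  have hne₂ : NashEq ψ P₂ q P' := hne.of_upperContour_subset fun i v hv => by
    obtain rfl := eq_first_of_prefers_rankedPref_second hv
    let := P i
    refine lt_of_le_of_ne (hle i) fun h => ?_
    rw [h] at hv
    exact not_prefers_rankedPref_first hv
  have hτ₂ : WPopular w P₂ q τ :=
    ⟨hτ, fun _ _ => not_moreWPopular_of_forall_not_prefers (fun i => (hw i).le)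
      fun _ => not_prefers_rankedPref_first⟩
  refine (hψ P₂ q hq P' hne₂ ⟨τ, hτ₂⟩).2 τ hτ ?_
  refine moreWPopular_of_forall_not_prefers (fun i => (hw i).le)
    (fun _ => not_prefers_rankedPref_first) (i := j₀) (prefers_rankedPref_first ?_) (hw j₀)
  let := P j₀
  exact hj₀.ne

theorem WPopularInEquilibrium.not_prefers_none_of_nashEq (hw : ∀ i, 0 < w i)
    (hψ : WPopularInEquilibrium w ψ) (hmech : IsMechanism ψ) (hq : ValidCaps q)
    (hne : NashEq ψ P q P') (i : I) : ¬ Prefers (P i) none (ψ P' q i) := fun h =>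
  hψ.not_paretoImproves_of_nashEq hw hq hne ((hmech P' q hq).update_none i)
    (paretoImproves_update h)

theorem WPopularInEquilibrium.nonWasteful_of_nashEq (hw : ∀ i, 0 < w i)
    (hψ : WPopularInEquilibrium w ψ) (hmech : IsMechanism ψ) (hq : ValidCaps q)
    (hne : NashEq ψ P q P') : NonWasteful P q (ψ P' q) := fun i _ hc h =>
  hψ.not_paretoImproves_of_nashEq hw hq hne ((hmech P' q hq).update_some hc i)
    (paretoImproves_update h)

end Equilibrium

section Rotation

variable {I O : Type} [Fintype O] {P : I → LinearOrder (Option O)} {α β γ : I} {a b : O}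

def IsRotationProfile (P : I → LinearOrder (Option O)) (α β γ : I) (a b : O) : Prop :=
  P α = rankedPref (some a) none ∧ P β = rankedPref (some a) (some b) ∧
    P γ = rankedPref (some b) none ∧ ∀ j ∉ ({α, β, γ} : Finset I), P j = rankedPref none none

theorem IsRotationProfile.not_prefers_pairAssign (hP : IsRotationProfile P α β γ a b)
    (hβγ : β ≠ γ) (μ' : I → Option O) {j : I} (hjα : j ≠ α) :
    ¬ Prefers (P j) (μ' j) (pairAssign β a γ b j) := by
  obtain ⟨-, hPβ, hPγ, hPo⟩ := hP
  by_cases hjγ : j = γ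
  · rw [hjγ, hPγ, pairAssign_apply_right]
    exact not_prefers_rankedPref_first
  by_cases hjβ : j = β
  · rw [hjβ, hPβ, pairAssign_apply_left hβγ]
    exact not_prefers_rankedPref_first
  · rw [hPo j (by simp [hjα, hjβ, hjγ]), pairAssign_apply_of_ne hjβ hjγ]
    exact not_prefers_rankedPref_first

variable [Fintype I] {w : I → ℝ} {q : O → ℕ}

theorem IsRotationProfile.wPopular_pairAssign_of_le (hP : IsRotationProfile P α β γ a b)
    (hw : ∀ i, 0 ≤ w i) (hq : ValidCaps q) (hqa : q a = 1) (hab : a ≠ b) (hαβ : α ≠ β)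
    (hαγ : α ≠ γ) (hβγ : β ≠ γ) (hwαβ : w α ≤ w β) :
    WPopular w P q (pairAssign β a γ b) := by
  refine ⟨isMatching_pairAssign hq β hab γ, fun μ' hμ' => ?_⟩
  refine not_moreWPopular_of_unique_gainer hw α
    (fun j hj => by_contra fun hjα => hP.not_prefers_pairAssign hβγ μ' hjα hj)
    fun hα => ⟨β, hwαβ, ?_⟩
  rw [hP.1, pairAssign_apply_of_ne hαβ hαγ] at hα
  have hμ'β : μ' β ≠ some a :=
    hμ'.ne_some_of_eq_some hqa hαβ (eq_first_of_prefers_rankedPref_second hα)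
  rw [hP.2.1, pairAssign_apply_left hβγ]
  exact prefers_rankedPref_first hμ'β

theorem IsRotationProfile.wPopular_pairAssign_of_le_of_le (hP : IsRotationProfile P α β γ a b)
    (hw : ∀ i, 0 ≤ w i) (hq : ValidCaps q) (hqa : q a = 1) (hqb : q b = 1) (hab : a ≠ b)
    (hαβ : α ≠ β) (hαγ : α ≠ γ) (hβγ : β ≠ γ) (hwβα : w β ≤ w α) (hwβγ : w β ≤ w γ) :
    WPopular w P q (pairAssign α a γ b) := by
  obtain ⟨hPα, hPβ, hPγ, hPo⟩ := hP
  refine ⟨isMatching_pairAssign hq α hab γ, fun μ' hμ' => ?_⟩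
  refine not_moreWPopular_of_unique_gainer hw β (fun j hj => by_contra fun hjβ => ?_) fun hβ => ?_
  · by_cases hjγ : j = γ
    · rw [hjγ, hPγ, pairAssign_apply_right] at hj
      exact not_prefers_rankedPref_first hj
    by_cases hjα : j = α
    · rw [hjα, hPα, pairAssign_apply_left hαγ] at hj
      exact not_prefers_rankedPref_first hj
    · rw [hPo j (by simp [hjα, hjβ, hjγ]), pairAssign_apply_of_ne hjα hjγ] at hj
      exact not_prefers_rankedPref_first hj
  rw [hPβ, pairAssign_apply_of_ne hαβ.symm hβγ] at hβ
  rcases eq_first_or_second_of_prefers_rankedPref_none hβ with hμ'β | hμ'β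
  · refine ⟨α, hwβα, ?_⟩
    rw [hPα, pairAssign_apply_left hαγ]
    exact prefers_rankedPref_first (hμ'.ne_some_of_eq_some hqa hαβ.symm hμ'β)
  · refine ⟨γ, hwβγ, ?_⟩
    rw [hPγ, pairAssign_apply_right]
    exact prefers_rankedPref_first (hμ'.ne_some_of_eq_some hqb hβγ hμ'β)

theorem IsRotationProfile.exists_wPopular (hP : IsRotationProfile P α β γ a b)
    (hw : ∀ i, 0 ≤ w i) (hq : ValidCaps q) (hqa : q a = 1) (hqb : q b = 1) (hab : a ≠ b)
    (hαβ : α ≠ β) (hαγ : α ≠ γ) (hβγ : β ≠ γ) (hwt : w α ≤ w β ∨ w β ≤ w γ) :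
    ∃ ν, WPopular w P q ν := by
  by_cases hwαβ : w α ≤ w β
  · exact ⟨_, hP.wPopular_pairAssign_of_le hw hq hqa hab hαβ hαγ hβγ hwαβ⟩
  · exact ⟨_, hP.wPopular_pairAssign_of_le_of_le hw hq hqa hqb hab hαβ hαγ hβγ
      (le_of_not_ge hwαβ) (hwt.resolve_left hwαβ)⟩

variable {ψ : Mechanism I O} {P' : I → LinearOrder (Option O)}

theorem WPopularInEquilibrium.false_of_rotation (hw : ∀ i, 0 ≤ w i)
    (hψ : WPopularInEquilibrium w ψ) (hq : ValidCaps q) (hqa : q a = 1) (hqb : q b = 1)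
    (hab : a ≠ b) (hαβ : α ≠ β) (hαγ : α ≠ γ) (hβγ : β ≠ γ)
    (hPβ : P β = rankedPref (some a) (some b))
    (hPγ : P γ = rankedPref (some a) (some b))
    (hPo : ∀ j ∉ ({α, β, γ} : Finset I), P j = rankedPref none none) (hne : NashEq ψ P q P')
    (hμα : ψ P' q α = some a) (hμβ : ψ P' q β = some b) (hμγ : ψ P' q γ = none)
    (hwt : w α < w β + w γ) (hwt' : w α ≤ w β ∨ w β ≤ w γ) : False := by
  let P₂ := update (update P α (rankedPref (some a) none)) γ (rankedPref (some b) none)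
  have hP₂ : IsRotationProfile P₂ α β γ a b := by
    refine ⟨by simp [P₂, hαγ], by simp [P₂, hαβ.symm, hβγ, hPβ], by simp [P₂], fun j hj => ?_⟩
    simp only [mem_insert, mem_singleton, not_or] at hj
    simp [P₂, hj.1, hj.2.2, hPo j (by simp [hj])]
  have hne₂ : NashEq ψ P₂ q P' := hne.of_upperContour_subset fun i v hv => by
    by_cases hiγ : i = γ
    · subst hiγ
      simp only [P₂, update_self, hμγ] at hv ⊢
      rw [eq_first_of_prefers_rankedPref_second hv, hPγ]
      exact prefers_rankedPref_second (by simp) (by simp)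
    by_cases hiα : i = α
    · subst hiα
      simp only [P₂, update_of_ne hαγ, update_self, hμα] at hv
      exact absurd hv not_prefers_rankedPref_first
    · simpa [P₂, hiγ, hiα] using hv
  obtain ⟨ν, hν⟩ := hP₂.exists_wPopular hw hq hqa hqb hab hαβ hαγ hβγ hwt'
  refine (hψ P₂ q hq P' hne₂ ⟨ν, hν⟩).2 _ (isMatching_pairAssign hq β hab γ) ?_
  refine moreWPopular_of_unique_loser hw
    (fun j hj => by_contra fun hjα => hP₂.not_prefers_pairAssign hβγ _ hjα hj) hβγ ?_ ?_ hwt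
  · rw [hP₂.2.1, pairAssign_apply_left hβγ, hμβ]
    exact prefers_rankedPref_first (by simpa using hab.symm)
  · rw [hP₂.2.2.1, pairAssign_apply_right, hμγ]
    exact prefers_rankedPref_first (by simp)

end Rotation

section Labeling

variable {I O : Type} [Fintype I] [Fintype O] {q : O → ℕ} {P : I → LinearOrder (Option O)}
  {μ : I → Option O} {T : Finset I} {a b : O}

theorem exists_labeling_of_nonWasteful (hT : T.card = 3) (hab : a ≠ b) (hqa : q a = 1)
    (hqb : q b = 1) (hPT : ∀ i ∈ T, P i = rankedPref (some a) (some b))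
    (hPo : ∀ i ∉ T, P i = rankedPref none none) (hμ : IsMatching q μ)
    (hIR : ∀ i, ¬ Prefers (P i) none (μ i)) (hNW : NonWasteful P q μ) :
    ∃ α β γ, α ≠ β ∧ α ≠ γ ∧ β ≠ γ ∧ T = {α, β, γ} ∧
      μ α = some a ∧ μ β = some b ∧ μ γ = none := by
  have hout : ∀ i ∉ T, μ i = none := fun i hi => by_contra fun h => hIR i <| by
    rw [hPo i hi]; exact prefers_rankedPref_first h
  have hin : ∀ i ∈ T, μ i = some a ∨ μ i = some b ∨ μ i = none := fun i hi => by
    by_contra! h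
    exact hIR i (by rw [hPT i hi]; exact prefers_rankedPref_none h.1 h.2.1 h.2.2)
  obtain ⟨α, hαT, hμα⟩ : ∃ α ∈ T, μ α = some a := by
    by_contra! h
    obtain ⟨x, hx⟩ := card_pos.1 (by omega : 0 < T.card)
    refine hNW x a (card_filter_eq_some_lt hqa.ge fun j hj => ?_) ?_
    · by_cases hjT : j ∈ T
      · exact h j hjT hj
      · simp [hout j hjT] at hj
    · rw [hPT x hx]; exact prefers_rankedPref_first (h x hx)
  obtain ⟨β, hβT, hβα, hμβ⟩ : ∃ β ∈ T, β ≠ α ∧ μ β = some b := by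
    by_contra! h
    obtain ⟨y, hy⟩ := card_pos.1 (by rw [card_erase_of_mem hαT]; omega : 0 < (T.erase α).card)
    obtain ⟨hyα, hyT⟩ := mem_erase.1 hy
    refine hNW y b (card_filter_eq_some_lt hqb.ge fun j hj => ?_) ?_
    · by_cases hjT : j ∈ T
      · by_cases hjα : j = α
        · exact hab (Option.some_injective _ (hμα.symm.trans (hjα ▸ hj)))
        · exact h j hjT hjα hj
      · simp [hout j hjT] at hj
    · rw [hPT y hyT]
      exact prefers_rankedPref_second (hμ.ne_some_of_eq_some hqa (Ne.symm hyα) hμα) (h y hyT hyα)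
  obtain ⟨γ, hγ⟩ := card_eq_one.1 (by
    rw [card_erase_of_mem (mem_erase.2 ⟨hβα, hβT⟩), card_erase_of_mem hαT, hT] :
    ((T.erase α).erase β).card = 1)
  have hγT : γ ∈ (T.erase α).erase β := hγ ▸ mem_singleton_self γ
  simp only [mem_erase] at hγT
  refine ⟨α, β, γ, hβα.symm, Ne.symm hγT.2.1, Ne.symm hγT.1, ?_, hμα, hμβ, ?_⟩
  · rw [← insert_erase hαT, ← insert_erase (mem_erase.2 ⟨hβα, hβT⟩), hγ]
  · rcases hin γ hγT.2.2 with h | h | h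
    · exact absurd h (hμ.ne_some_of_eq_some hqa (Ne.symm hγT.2.1) hμα)
    · exact absurd h (hμ.ne_some_of_eq_some hqb (Ne.symm hγT.1) hμβ)
    · exact h

end Labeling

section Weights

variable {I : Type} {w : I → ℝ}

theorem exists_triple_of_not_essentiallyDistinct [Fintype I] (hI : 3 ≤ Fintype.card I)
    (hw : ∀ i, 0 < w i) {e : Fin (Fintype.card I) ≃ I} (he : DecreasingEnum w e)
    (hnd : ¬ DistinctWeights w) (hned : ¬ EssentiallyDistinct w e) :
    ∃ x y z : I, x ≠ y ∧ x ≠ z ∧ y ≠ z ∧ w y = w z ∧ w x < w y + w z := by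
  unfold DecreasingEnum at he
  unfold EssentiallyDistinct at hned
  generalize Fintype.card I = n at *
  have hne : ∀ {s t : Fin n}, (s : ℕ) ≠ t → e s ≠ e t := fun h =>
    e.injective.ne (Fin.ne_of_val_ne h)
  obtain ⟨j₀, k₀, hjk₀, hw₀⟩ : ∃ j k : Fin n, j < k ∧ w (e j) = w (e k) := by
    obtain ⟨u, v, huv, hu⟩ := not_injective_iff.1 hnd
    rcases lt_or_gt_of_ne (e.symm.injective.ne hu) with h | h
    · exact ⟨_, _, h, by simpa using huv⟩
    · exact ⟨_, _, h, by simpa using huv.symm⟩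
  let last : Fin n := ⟨n - 1, by omega⟩
  -- Either every tie involves the last agent, so that the last two weights are equal and the
  -- third condition of essential distinctness fails, or some tie `j, k` avoids it and the last
  -- agent completes the triple.
  by_cases hC1 : ∀ j k : Fin n, j < k → (k : ℕ) + 2 ≤ n → w (e j) ≠ w (e k)
  · have hk₀ : (k₀ : ℕ) = n - 1 := by
      by_contra h
      exact hC1 j₀ k₀ hjk₀ (by omega) hw₀
    have hC2 : ∀ j k : Fin n, (j : ℕ) + 2 = n → (k : ℕ) + 1 = n → w (e j) = w (e k) := by
      intro j k hj hk
      obtain rfl : k = k₀ := Fin.ext (by omega)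
      have hj₀ : j₀ ≤ j := Fin.le_def.2 (by have := Fin.lt_def.1 hjk₀; omega)
      exact le_antisymm (hw₀ ▸ he j₀ j hj₀) (he j k (Fin.le_def.2 (by omega)))
    obtain ⟨j, k, l, hj, hk, hl, hlt⟩ : ∃ j k l : Fin n, (j : ℕ) + 3 = n ∧ (k : ℕ) + 2 = n ∧
        (l : ℕ) + 1 = n ∧ w (e j) < w (e k) + w (e l) := by
      by_contra! h
      exact hned ⟨hC1, hC2, h⟩
    exact ⟨e j, e k, e l, hne (by omega), hne (by omega), hne (by omega), hC2 k l hk hl, hlt⟩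
  · push Not at hC1
    obtain ⟨j, k, hjk, hk, hjkw⟩ := hC1
    have hjk' := Fin.lt_def.1 hjk
    refine ⟨e last, e j, e k, hne (by simp [last]; omega), hne (by simp [last]; omega),
      hne (by omega), hjkw, ?_⟩
    linarith [he k last (Fin.le_def.2 (by simp [last]; omega)), hw (e j)]

theorem rotation_weight_conditions (hw : ∀ i, 0 < w i) {x y z α β γ : I} (hyz : w y = w z)
    (hx : w x < w y + w z) (hα : α ∈ ({x, y, z} : Finset I)) (hβ : β ∈ ({x, y, z} : Finset I))
    (hγ : γ ∈ ({x, y, z} : Finset I)) (hαβ : α ≠ β) (hαγ : α ≠ γ) (hβγ : β ≠ γ) :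
    w α < w β + w γ ∧ (w α ≤ w β ∨ w β ≤ w γ) := by
  simp only [mem_insert, mem_singleton] at hα hβ hγ
  have := hw x
  have := hw z
  rcases hα with rfl | rfl | rfl <;> rcases hβ with rfl | rfl | rfl <;>
    rcases hγ with rfl | rfl | rfl <;> first
    | exact absurd rfl ‹_ ≠ _›
    | exact ⟨by linarith, by by_contra! h; linarith [h.1, h.2]⟩

end Weights

/-- If the weights are neither distinct nor essentially distinct, then no
mechanism admitting a Nash equilibrium at every problem is w-popular in equilibrium. -/
theorem stmt15 {I O : Type} [Fintype I] [Fintype O]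
    (hI : 3 ≤ Fintype.card I) (hIO : Fintype.card I ≤ Fintype.card O)
    (w : I → ℝ) (hw : ∀ i, 0 < w i)
    (e : Fin (Fintype.card I) ≃ I) (he : DecreasingEnum w e)
    (hnd : ¬ DistinctWeights w) (hned : ¬ EssentiallyDistinct w e) :
    ¬ ∃ ψ : Mechanism I O, IsMechanism ψ ∧ AdmitsNash ψ ∧ WPopularInEquilibrium w ψ := by
  rintro ⟨ψ, hmech, hadm, hψ⟩
  obtain ⟨x, y, z, hxy, hxz, hyz, hwyz, hwx⟩ :=
    exists_triple_of_not_essentiallyDistinct hI hw he hnd hned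
  obtain ⟨a, b, hab⟩ := Fintype.exists_pair_of_one_lt_card (by omega : 1 < Fintype.card O)
  let q : O → ℕ := fun _ => 1
  have hq : ValidCaps q := fun _ => le_rfl
  let P : I → LinearOrder (Option O) := fun i =>
    if i ∈ ({x, y, z} : Finset I) then rankedPref (some a) (some b) else rankedPref none none
  obtain ⟨P', hne⟩ := hadm P q hq
  obtain ⟨α, β, γ, hαβ, hαγ, hβγ, hT, hμα, hμβ, hμγ⟩ := exists_labeling_of_nonWasteful
    (card_eq_three.2 ⟨x, y, z, hxy, hxz, hyz, rfl⟩) hab rfl rfl (fun i hi => if_pos hi)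
    (fun i hi => if_neg hi) (hmech P' q hq) (hψ.not_prefers_none_of_nashEq hw hmech hq hne)
    (hψ.nonWasteful_of_nashEq hw hmech hq hne)
  have hmem : ∀ i ∈ ({α, β, γ} : Finset I), i ∈ ({x, y, z} : Finset I) := fun i hi => by
    rwa [hT]
  obtain ⟨hwt, hwt'⟩ := rotation_weight_conditions hw hwyz hwx (hmem α (by simp))
    (hmem β (by simp)) (hmem γ (by simp)) hαβ hαγ hβγ
  exact hψ.false_of_rotation (fun i => (hw i).le) hq rfl rfl hab hαβ hαγ hβγ
    (if_pos (hmem β (by simp))) (if_pos (hmem γ (by simp))) (fun j hj => if_neg (by rwa [hT])) hne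
    hμα hμβ hμγ hwt hwt'
end

section
/- Suppose the weight profile w is distinct or essentially distinct, and let μ be a w-popular matching at a problem (P, q). Then for each k ≤ n−2, agent i_k's assignment μ_{i_k} is her most preferred element (with respect to P_{i_k}) of the set consisting of ∅ together with all objects that still have remaining capacity after the assignments of i_1, …, i_{k−1} under μ; that is, the agents i_1, …, i_{n−2} receive, one by one in decreasing order of weight, their top remaining choices. -/
open scoped Classical

section AuxStmt18

variable {I O : Type} [Fintype I] [Fintype O]

lemma aux_lt_of_not_le (l : LinearOrder (Option O)) {x y : Option O} (h : ¬ l.le x y) :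
    Prefers l x y := by
  letI := l; exact lt_of_not_ge h

lemma aux_prefers_asymm (l : LinearOrder (Option O)) {x y : Option O} (h : Prefers l x y) :
    ¬ Prefers l y x := by
  letI := l; exact fun h' => lt_asymm h h'

lemma aux_prefers_irrefl (l : LinearOrder (Option O)) {x : Option O} (h : Prefers l x x) :
    False := by
  letI := l; exact lt_irrefl _ h

lemma moreW_of (w : I → ℝ) (hw : ∀ i, 0 < w i) (P : I → LinearOrder (Option O))
    (μ μ' : I → Option O) (i : I) (hi : Prefers (P i) (μ' i) (μ i))
    (hub : (∑ m ∈ Finset.univ.filter fun m : I => Prefers (P m) (μ m) (μ' m), w m) < w i) :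
    MoreWPopular w P μ' μ := by
  unfold MoreWPopular
  refine hub.trans_le ?_
  exact Finset.single_le_sum (fun m _ => (hw m).le)
    (Finset.mem_filter.mpr ⟨Finset.mem_univ _, hi⟩)

/-- In the no-swap improvement `Function.update μ i x`, nobody strictly prefers `μ`. -/
lemma prefer_old_empty (P : I → LinearOrder (Option O)) (μ : I → Option O) (i : I)
    (x : Option O) (hx : Prefers (P i) x (μ i)) :
    (Finset.univ.filter fun m : I => Prefers (P m) (μ m) (Function.update μ i x m)) = ∅ := by
  ext m
  simp only [Finset.mem_filter, Finset.mem_univ, true_and, Finset.notMem_empty, iff_false]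
  intro hm
  rcases eq_or_ne m i with rfl | hme
  · rw [Function.update_self] at hm
    exact aux_prefers_asymm _ hx hm
  · rw [Function.update_of_ne hme] at hm
    exact aux_prefers_irrefl _ hm

/-- Key weight comparison: under distinct or essentially distinct weights, any agent after
position `k` (with `k + 3 ≤ n`) has strictly smaller weight than agent `e k`. -/
lemma wkey (hI : 3 ≤ Fintype.card I) (w : I → ℝ) (hw : ∀ i, 0 < w i)
    (e : Fin (Fintype.card I) ≃ I) (he : DecreasingEnum w e)
    (hde : DistinctWeights w ∨ EssentiallyDistinct w e)
    {k m : Fin (Fintype.card I)} (hk : (k : ℕ) + 3 ≤ Fintype.card I) (hkm : k < m) :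
    w (e m) < w (e k) := by
  have hle : w (e m) ≤ w (e k) := he k m hkm.le
  rcases hde with hd | ⟨h1, h2, h3⟩
  · exact lt_of_le_of_ne hle fun hh => hkm.ne' (e.injective (hd hh))
  · by_cases hm : (m : ℕ) + 2 ≤ Fintype.card I
    · exact lt_of_le_of_ne hle (Ne.symm (h1 k m hkm hm))
    · have hm1 : (m : ℕ) + 1 = Fintype.card I := by have := m.isLt; omega
      have hj3 : Fintype.card I - 3 < Fintype.card I := by omega
      have hk2 : Fintype.card I - 2 < Fintype.card I := by omega
      have hl1 : Fintype.card I - 1 < Fintype.card I := by omega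
      have h3' := h3 ⟨_, hj3⟩ ⟨_, hk2⟩ ⟨_, hl1⟩
        (show Fintype.card I - 3 + 3 = Fintype.card I by omega)
        (show Fintype.card I - 2 + 2 = Fintype.card I by omega)
        (show Fintype.card I - 1 + 1 = Fintype.card I by omega)
      have hml : m = ⟨Fintype.card I - 1, hl1⟩ := Fin.ext (by simp; omega)
      have hpos := hw (e ⟨Fintype.card I - 2, hk2⟩)
      have hkj : w (e ⟨Fintype.card I - 3, hj3⟩) ≤ w (e k) :=
        he k ⟨Fintype.card I - 3, hj3⟩ (by simp [Fin.le_def]; omega)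
      rw [hml]
      linarith

end AuxStmt18

/-- With distinct or essentially distinct weights, at any w-popular matching
each of the agents `i_1, …, i_{n-2}` (i.e. `e k` for `k + 3 ≤ n` in 0-based indexing)
receives her most preferred element of `{∅} ∪ {objects with remaining capacity after the
assignments of the earlier agents}`. -/
theorem stmt18 {I O : Type} [Fintype I] [Fintype O]
    (hI : 3 ≤ Fintype.card I) (hIO : Fintype.card I ≤ Fintype.card O)
    (w : I → ℝ) (hw : ∀ i, 0 < w i)
    (e : Fin (Fintype.card I) ≃ I) (he : DecreasingEnum w e)
    (hde : DistinctWeights w ∨ EssentiallyDistinct w e)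
    (P : I → LinearOrder (Option O)) (q : O → ℕ) (hq : ValidCaps q)
    (μ : I → Option O) (hμ : WPopular w P q μ)
    (k : Fin (Fintype.card I)) (hk : (k : ℕ) + 3 ≤ Fintype.card I) :
    (μ (e k) = none ∨ ∃ a : O, μ (e k) = some a ∧
      (Finset.univ.filter fun j : Fin (Fintype.card I) => j < k ∧ μ (e j) = some a).card
        < q a) ∧
    (∀ x : Option O,
      (x = none ∨ ∃ a : O, x = some a ∧
        (Finset.univ.filter fun j : Fin (Fintype.card I) => j < k ∧ μ (e j) = some a).card
          < q a) →
      (P (e k)).le x (μ (e k))) := by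
  classical
  obtain ⟨hmatch, hpop⟩ := hμ
  constructor
  · -- feasibility of μ (e k)
    cases hμek : μ (e k) with
    | none => exact Or.inl rfl
    | some a =>
      refine Or.inr ⟨a, rfl, ?_⟩
      have hsub : (Finset.univ.filter fun j : Fin (Fintype.card I) =>
            j < k ∧ μ (e j) = some a).image e
          ⊆ Finset.univ.filter fun i : I => μ i = some a := by
        intro i hi
        simp only [Finset.mem_image, Finset.mem_filter, Finset.mem_univ, true_and] at hi ⊢
        obtain ⟨j, ⟨_, hj⟩, rfl⟩ := hi
        exact hj
      have hss : (Finset.univ.filter fun j : Fin (Fintype.card I) =>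
            j < k ∧ μ (e j) = some a).image e
          ⊂ Finset.univ.filter fun i : I => μ i = some a := by
        refine (Finset.ssubset_iff_of_subset hsub).mpr ⟨e k, by simp [hμek], ?_⟩
        simp only [Finset.mem_image, Finset.mem_filter, Finset.mem_univ, true_and, not_exists]
        rintro j ⟨⟨hjk, -⟩, hje⟩
        exact hjk.ne (e.injective hje)
      calc (Finset.univ.filter fun j : Fin (Fintype.card I) =>
              j < k ∧ μ (e j) = some a).card
          = ((Finset.univ.filter fun j : Fin (Fintype.card I) =>
              j < k ∧ μ (e j) = some a).image e).card :=
            (Finset.card_image_of_injective _ e.injective).symm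
        _ < (Finset.univ.filter fun i : I => μ i = some a).card := Finset.card_lt_card hss
        _ ≤ q a := hmatch a
  · intro x hxmem
    by_contra hcon
    have hx : Prefers (P (e k)) x (μ (e k)) := aux_lt_of_not_le _ hcon
    rcases hxmem with rfl | ⟨a, rfl, hrem⟩
    · -- x = none : simply unassign agent e k
      set μ' := Function.update μ (e k) none with hμ'
      have hmatch' : IsMatching q μ' := by
        intro a
        refine le_trans (Finset.card_le_card ?_) (hmatch a)
        intro m hm
        simp only [Finset.mem_filter, Finset.mem_univ, true_and] at hm ⊢
        rcases eq_or_ne m (e k) with rfl | hme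
        · rw [hμ', Function.update_self] at hm; exact absurd hm (by simp)
        · rwa [hμ', Function.update_of_ne hme] at hm
      refine hpop μ' hmatch' (moreW_of w hw P μ μ' (e k) ?_ ?_)
      · rw [hμ', Function.update_self]; exact hx
      · rw [hμ', prefer_old_empty P μ (e k) none hx]
        simpa using hw (e k)
    · -- x = some a
      have hne : μ (e k) ≠ some a := by
        intro h
        rw [h] at hx
        exact aux_prefers_irrefl _ hx
      by_cases htot : (Finset.univ.filter fun i : I => μ i = some a).card < q a
      · -- a has globally unfilled capacity: give a to e k
        set μ' := Function.update μ (e k) (some a) with hμ'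
        have hmatch' : IsMatching q μ' := by
          intro b
          by_cases hba : b = a
          · subst hba
            have hsub : (Finset.univ.filter fun m : I => μ' m = some b)
                ⊆ insert (e k) (Finset.univ.filter fun m : I => μ m = some b) := by
              intro m hm
              simp only [Finset.mem_filter, Finset.mem_univ, true_and] at hm
              rcases eq_or_ne m (e k) with rfl | hme
              · exact Finset.mem_insert_self _ _
              · rw [hμ', Function.update_of_ne hme] at hm
                exact Finset.mem_insert_of_mem (by simp [hm])
            refine le_trans (Finset.card_le_card hsub) ?_
            refine le_trans (Finset.card_insert_le _ _) ?_
            omega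
          · refine le_trans (Finset.card_le_card ?_) (hmatch b)
            intro m hm
            simp only [Finset.mem_filter, Finset.mem_univ, true_and] at hm ⊢
            rcases eq_or_ne m (e k) with rfl | hme
            · rw [hμ', Function.update_self] at hm
              exact absurd (Option.some_injective _ hm.symm) hba
            · rwa [hμ', Function.update_of_ne hme] at hm
        refine hpop μ' hmatch' (moreW_of w hw P μ μ' (e k) ?_ ?_)
        · rw [hμ', Function.update_self]; exact hx
        · rw [hμ', prefer_old_empty P μ (e k) (some a) hx]
          simpa using hw (e k)
      · -- a is full: find a lower-priority agent holding a and swap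
        have hcard : (Finset.univ.filter fun m : Fin (Fintype.card I) =>
              μ (e m) = some a).card
            = (Finset.univ.filter fun i : I => μ i = some a).card := by
          rw [← Finset.card_image_of_injective _ e.injective]
          congr 1
          ext i
          simp only [Finset.mem_image, Finset.mem_filter, Finset.mem_univ, true_and]
          constructor
          · rintro ⟨m, hm, rfl⟩; exact hm
          · intro h; exact ⟨e.symm i, by simpa using h, e.apply_symm_apply i⟩
        have hlt : (Finset.univ.filter fun j : Fin (Fintype.card I) =>
              j < k ∧ μ (e j) = some a).card
            < (Finset.univ.filter fun m : Fin (Fintype.card I) => μ (e m) = some a).card := by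
          rw [hcard]; omega
        obtain ⟨m, hmT, hmS⟩ : ∃ m ∈ Finset.univ.filter
            (fun m : Fin (Fintype.card I) => μ (e m) = some a),
            m ∉ Finset.univ.filter
              (fun j : Fin (Fintype.card I) => j < k ∧ μ (e j) = some a) :=
          Finset.not_subset.mp
            (fun hsub => absurd (Finset.card_le_card hsub) (not_le.mpr hlt))
        simp only [Finset.mem_filter, Finset.mem_univ, true_and, not_and] at hmT hmS
        have hkm : k < m := by
          rcases lt_trichotomy m k with h | rfl | h
          · exact absurd hmT (hmS h)
          · exact absurd hmT hne
          · exact h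
        have hmek : e m ≠ e k := fun h => hkm.ne' (e.injective h)
        set μ' := Function.update (Function.update μ (e m) none) (e k) (some a) with hμ'
        have hmatch' : IsMatching q μ' := by
          intro b
          by_cases hba : b = a
          · subst hba
            have hsub : (Finset.univ.filter fun m' : I => μ' m' = some b)
                ⊆ insert (e k)
                  ((Finset.univ.filter fun m' : I => μ m' = some b).erase (e m)) := by
              intro m' hm'
              simp only [Finset.mem_filter, Finset.mem_univ, true_and] at hm'
              rcases eq_or_ne m' (e k) with rfl | hke
              · exact Finset.mem_insert_self _ _
              · rw [hμ', Function.update_of_ne hke] at hm'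
                rcases eq_or_ne m' (e m) with rfl | hmm
                · rw [Function.update_self] at hm'; exact absurd hm' (by simp)
                · rw [Function.update_of_ne hmm] at hm'
                  exact Finset.mem_insert_of_mem
                    (Finset.mem_erase.mpr ⟨hmm, by simp [hm']⟩)
            have hmem : e m ∈ Finset.univ.filter fun m' : I => μ m' = some b := by
              simp [hmT]
            have h1 : 1 ≤ (Finset.univ.filter fun m' : I => μ m' = some b).card :=
              Finset.card_pos.mpr ⟨e m, hmem⟩
            refine le_trans (Finset.card_le_card hsub) ?_
            refine le_trans (Finset.card_insert_le _ _) ?_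
            rw [Finset.card_erase_of_mem hmem]
            have := hmatch b
            omega
          · refine le_trans (Finset.card_le_card ?_) (hmatch b)
            intro m' hm'
            simp only [Finset.mem_filter, Finset.mem_univ, true_and] at hm' ⊢
            rcases eq_or_ne m' (e k) with rfl | hke
            · rw [hμ', Function.update_self] at hm'
              exact absurd (Option.some_injective _ hm'.symm) hba
            · rw [hμ', Function.update_of_ne hke] at hm'
              rcases eq_or_ne m' (e m) with rfl | hmm
              · rw [Function.update_self] at hm'; exact absurd hm' (by simp)
              · rwa [Function.update_of_ne hmm] at hm'
        have hi : Prefers (P (e k)) (μ' (e k)) (μ (e k)) := by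
          rw [hμ', Function.update_self]; exact hx
        have hsubm : (Finset.univ.filter fun m' : I => Prefers (P m') (μ m') (μ' m'))
            ⊆ {e m} := by
          intro m' hm'
          simp only [Finset.mem_filter, Finset.mem_univ, true_and] at hm'
          simp only [Finset.mem_singleton]
          by_contra hmm
          rcases eq_or_ne m' (e k) with rfl | hke
          · rw [hμ', Function.update_self] at hm'
            exact aux_prefers_asymm _ hx hm'
          · rw [hμ', Function.update_of_ne hke, Function.update_of_ne hmm] at hm'
            exact aux_prefers_irrefl _ hm'
        have hsum : (∑ m' ∈ Finset.univ.filter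
              fun m' : I => Prefers (P m') (μ m') (μ' m'), w m') ≤ w (e m) := by
          calc (∑ m' ∈ Finset.univ.filter
                fun m' : I => Prefers (P m') (μ m') (μ' m'), w m')
              ≤ ∑ m' ∈ ({e m} : Finset I), w m' :=
              Finset.sum_le_sum_of_subset_of_nonneg hsubm (fun m' _ _ => (hw m').le)
            _ = w (e m) := Finset.sum_singleton _ _
        exact hpop μ' hmatch'
          (moreW_of w hw P μ μ' (e k) hi
            (hsum.trans_lt (wkey hI w hw e he hde hk hkm)))
end

section
/- Let j_1, j_2, j_3 be three distinct agents and a_1, a_2, a_3 three distinct objects each with capacity 1, and consider a problem in which j_1, j_2, j_3 all have the same preference a_1 P a_2 P a_3 P ∅ (with all other objects unacceptable to them) and every other agent finds every object unacceptable. If each of the three agents' weights is strictly less than the sum of the other two (w_{j_r} < w_{j_s} + w_{j_t} for every permutation {r, s, t} of {1, 2, 3}), then no w-popular matching exists at this problem. -/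
open scoped Classical

section MyAux

variable {I O : Type} [Fintype I] [Fintype O]

lemma match_unique {q : O → ℕ} {μ : I → Option O} (hm : IsMatching q μ)
    {a : O} (hqa : q a = 1) {i j : I} (hij : i ≠ j) (hi : μ i = some a) :
    μ j ≠ some a := by
  intro hj
  have h := hm a
  rw [hqa] at h
  have hsub : ({i, j} : Finset I) ⊆ Finset.univ.filter fun k => μ k = some a := by
    intro k hk
    simp only [Finset.mem_insert, Finset.mem_singleton] at hk
    rcases hk with rfl | rfl <;> simp [hi, hj]
  have h2 := Finset.card_le_card hsub
  rw [Finset.card_insert_of_notMem (by simp [hij]), Finset.card_singleton] at h2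
  omega

lemma key_lemma {p : LinearOrder (Option O)}
    {a1 a2 a3 : O} (ha12 : a1 ≠ a2) (ha13 : a1 ≠ a3) (ha23 : a2 ≠ a3)
    (hp12 : p.lt (some a2) (some a1)) (hp23 : p.lt (some a3) (some a2))
    (hp3 : p.lt none (some a3))
    (hpu : ∀ b : O, b ≠ a1 → b ≠ a2 → b ≠ a3 → p.lt (some b) none)
    (w : I → ℝ) (hw : ∀ i, 0 < w i)
    {r s t : I} (hrs : r ≠ s) (hrt : r ≠ t) (hst : s ≠ t)
    {P : I → LinearOrder (Option O)} (hPs : P s = p) (hPt : P t = p)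
    (hPo : ∀ k : I, k ≠ r → k ≠ s → k ≠ t → NothingAcceptable (P k))
    (hwr : w r < w s + w t)
    {q : O → ℕ} (hq : ValidCaps q)
    (μ : I → Option O)
    (hs1 : μ s ≠ some a1) (hs2 : μ s ≠ some a2) (ht1 : μ t ≠ some a1) :
    IsMatching q (fun i => if i = t then some a1 else if i = s then some a2
      else if i = r then some a3 else none) ∧
    MoreWPopular w P (fun i => if i = t then some a1 else if i = s then some a2
      else if i = r then some a3 else none) μ := by
  letI := p
  set μ' : I → Option O := fun i => if i = t then some a1 else if i = s then some a2
      else if i = r then some a3 else none with hμ'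
  have top1 : ∀ x : Option O, x ≠ some a1 → p.lt x (some a1) := by
    rintro (_ | b) hx
    · exact lt_trans (lt_trans hp3 hp23) hp12
    · by_cases hb2 : b = a2
      · subst hb2; exact hp12
      by_cases hb3 : b = a3
      · subst hb3; exact lt_trans hp23 hp12
      have hb1 : b ≠ a1 := fun h => hx (by rw [h])
      exact lt_trans (hpu b hb1 hb2 hb3) (lt_trans (lt_trans hp3 hp23) hp12)
  have top2 : ∀ x : Option O, x ≠ some a1 → x ≠ some a2 → p.lt x (some a2) := by
    rintro (_ | b) hx1 hx2
    · exact lt_trans hp3 hp23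
    · by_cases hb3 : b = a3
      · subst hb3; exact hp23
      have hb1 : b ≠ a1 := fun h => hx1 (by rw [h])
      have hb2 : b ≠ a2 := fun h => hx2 (by rw [h])
      exact lt_trans (hpu b hb1 hb2 hb3) (lt_trans hp3 hp23)
  constructor
  · intro a
    have hcard : (Finset.univ.filter fun i : I => μ' i = some a).card ≤ 1 := by
      apply Finset.card_le_one.mpr
      intro i hi j hj
      simp only [Finset.mem_filter, Finset.mem_univ, true_and, hμ'] at hi hj
      split_ifs at hi hj <;> simp_all
    exact le_trans hcard (hq a)
  · unfold MoreWPopular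
    have hloser : (Finset.univ.filter fun j : I => Prefers (P j) (μ j) (μ' j)) ⊆ {r} := by
      intro i hi
      simp only [Finset.mem_filter, Finset.mem_univ, true_and] at hi
      simp only [Finset.mem_singleton]
      by_contra hir
      by_cases hit : i = t
      · subst hit
        have hμ't : μ' i = some a1 := by simp [hμ']
        rw [hμ't] at hi
        unfold Prefers at hi
        rw [hPt] at hi
        exact absurd hi (lt_asymm (top1 _ ht1))
      by_cases his : i = s
      · subst his
        have hμ's : μ' i = some a2 := by simp [hμ', hst]
        rw [hμ's] at hi
        unfold Prefers at hi
        rw [hPs] at hi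
        exact absurd hi (lt_asymm (top2 _ hs1 hs2))
      · have hμ'i : μ' i = none := by simp [hμ', hit, his, hir]
        rw [hμ'i] at hi
        unfold Prefers at hi
        have hNA := hPo i hir his hit
        cases hmi : μ i with
        | none => rw [hmi] at hi; exact absurd hi (@lt_irrefl _ (P i).toPreorder _)
        | some b => rw [hmi] at hi; exact absurd hi (@lt_asymm _ (P i).toPreorder _ _ (hNA b))
    have hwin : ({s, t} : Finset I) ⊆
        Finset.univ.filter fun i : I => Prefers (P i) (μ' i) (μ i) := by
      intro i hi
      simp only [Finset.mem_insert, Finset.mem_singleton] at hi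
      simp only [Finset.mem_filter, Finset.mem_univ, true_and]
      rcases hi with rfl | rfl
      · have hμ's : μ' i = some a2 := by simp [hμ', hst]
        rw [hμ's]
        unfold Prefers
        rw [hPs]
        exact top2 _ hs1 hs2
      · have hμ't : μ' i = some a1 := by simp [hμ']
        rw [hμ't]
        unfold Prefers
        rw [hPt]
        exact top1 _ ht1
    have h1 : (∑ j ∈ Finset.univ.filter fun j : I => Prefers (P j) (μ j) (μ' j), w j)
        ≤ ∑ j ∈ ({r} : Finset I), w j :=
      Finset.sum_le_sum_of_subset_of_nonneg hloser (fun i _ _ => (hw i).le)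
    have h2 : (∑ i ∈ ({s, t} : Finset I), w i)
        ≤ ∑ i ∈ Finset.univ.filter fun i : I => Prefers (P i) (μ' i) (μ i), w i :=
      Finset.sum_le_sum_of_subset_of_nonneg hwin (fun i _ _ => (hw i).le)
    rw [Finset.sum_singleton] at h1
    rw [Finset.sum_pair hst] at h2
    linarith

end MyAux

/-- Three agents with identical preferences `a₁ P a₂ P a₃ P ∅` over three
unit-capacity objects (all other agents finding every object unacceptable), each of whose
weights is strictly less than the sum of the other two: no w-popular matching exists. -/
theorem stmt19 {I O : Type} [Fintype I] [Fintype O]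
    (hI : 3 ≤ Fintype.card I) (hIO : Fintype.card I ≤ Fintype.card O)
    (w : I → ℝ) (hw : ∀ i, 0 < w i)
    (j1 j2 j3 : I) (hj12 : j1 ≠ j2) (hj13 : j1 ≠ j3) (hj23 : j2 ≠ j3)
    (a1 a2 a3 : O) (ha12 : a1 ≠ a2) (ha13 : a1 ≠ a3) (ha23 : a2 ≠ a3)
    (q : O → ℕ) (hq : ValidCaps q) (hq1 : q a1 = 1) (hq2 : q a2 = 1) (hq3 : q a3 = 1)
    (p : LinearOrder (Option O))
    (hp12 : p.lt (some a2) (some a1)) (hp23 : p.lt (some a3) (some a2))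
    (hp3 : p.lt none (some a3))
    (hpu : ∀ b : O, b ≠ a1 → b ≠ a2 → b ≠ a3 → p.lt (some b) none)
    (P : I → LinearOrder (Option O)) (hP1 : P j1 = p) (hP2 : P j2 = p) (hP3 : P j3 = p)
    (hPo : ∀ k : I, k ≠ j1 → k ≠ j2 → k ≠ j3 → NothingAcceptable (P k))
    (hw1 : w j1 < w j2 + w j3) (hw2 : w j2 < w j1 + w j3) (hw3 : w j3 < w j1 + w j2) :
    ∀ μ : I → Option O, ¬ WPopular w P q μ := by
  rintro μ ⟨hm, hns⟩
  by_cases h1 : μ j1 = some a1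
  · have h2 : μ j2 ≠ some a1 := match_unique hm hq1 hj12 h1
    have h3 : μ j3 ≠ some a1 := match_unique hm hq1 hj13 h1
    by_cases h2' : μ j2 = some a2
    · -- r = j1, s = j3, t = j2
      have h3' : μ j3 ≠ some a2 := match_unique hm hq2 hj23 h2'
      obtain ⟨hmm, hmp⟩ := key_lemma ha12 ha13 ha23 hp12 hp23 hp3 hpu w hw
        hj13 hj12 hj23.symm hP3 hP2
        (fun k hk1 hk3 hk2 => hPo k hk1 hk2 hk3)
        (by linarith) hq μ h3 h3' h2
      exact hns _ hmm hmp
    · -- r = j1, s = j2, t = j3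
      obtain ⟨hmm, hmp⟩ := key_lemma ha12 ha13 ha23 hp12 hp23 hp3 hpu w hw
        hj12 hj13 hj23 hP2 hP3 hPo (by linarith) hq μ h2 h2' h3
      exact hns _ hmm hmp
  · by_cases h2 : μ j2 = some a1
    · -- r = j2
      have h3 : μ j3 ≠ some a1 := match_unique hm hq1 hj23 h2
      by_cases h1' : μ j1 = some a2
      · -- r = j2, s = j3, t = j1
        have h3' : μ j3 ≠ some a2 := match_unique hm hq2 hj13 h1'
        obtain ⟨hmm, hmp⟩ := key_lemma ha12 ha13 ha23 hp12 hp23 hp3 hpu w hw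
          hj23 hj12.symm hj13.symm hP3 hP1
          (fun k hk2 hk3 hk1 => hPo k hk1 hk2 hk3)
          (by linarith) hq μ h3 h3' h1
        exact hns _ hmm hmp
      · -- r = j2, s = j1, t = j3
        obtain ⟨hmm, hmp⟩ := key_lemma ha12 ha13 ha23 hp12 hp23 hp3 hpu w hw
          hj12.symm hj23 hj13 hP1 hP3
          (fun k hk2 hk1 hk3 => hPo k hk1 hk2 hk3)
          (by linarith) hq μ h1 h1' h3
        exact hns _ hmm hmp
    · -- r = j3
      by_cases h1' : μ j1 = some a2
      · -- r = j3, s = j2, t = j1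
        have h2' : μ j2 ≠ some a2 := match_unique hm hq2 hj12 h1'
        obtain ⟨hmm, hmp⟩ := key_lemma ha12 ha13 ha23 hp12 hp23 hp3 hpu w hw
          hj23.symm hj13.symm hj12.symm hP2 hP1
          (fun k hk3 hk2 hk1 => hPo k hk1 hk2 hk3)
          (by linarith) hq μ h2 h2' h1
        exact hns _ hmm hmp
      · -- r = j3, s = j1, t = j2
        obtain ⟨hmm, hmp⟩ := key_lemma ha12 ha13 ha23 hp12 hp23 hp3 hpu w hw
          hj13.symm hj23.symm hj12 hP1 hP2
          (fun k hk3 hk1 hk2 => hPo k hk1 hk2 hk3)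
          (by linarith) hq μ h1 h1' h2
        exact hns _ hmm hmp
end
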